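/- arXiv:funct-an/9712009 — 9 statements merged into one kernel-verified Lean document; each statement's English description precedes it below -/
import Mathlib

section
/- Under the stated setup, the restriction of σ to A ∩ B_2′ is a unital *-homomorphism: σ is linear, σ(1) = 1, σ(x*) = σ(x)* for every x ∈ A, and σ(xy) = σ(x)σ(y) whenever x and y are elements of A commuting with every element of B_2. -/
/-!
For `x` commuting with `B 2`, each cross term of `σ x * σ y` collapses: since `a i = a i * p`,
the element `star (a i) * a j` lies in `p B₁ p ⊆ s B₂ s*`, say it is `s c s*`, and then
`(s x s*) (s c s*) (s y s*) = s x c y s* = s c x y s* = (s c s*) (s (x y) s*)`. Summing over `i, j`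
and using `∑ i, a i * star (a i) = 1` gives `σ x * σ y = σ (x * y)`.
-/

theorem conj_mul_conj_mul_conj {A : Type*} [Monoid A] [StarMul A] {s : A}
    (hs : star s * s = 1) {x c : A} (hxc : Commute x c) (y : A) :
    s * x * star s * (s * c * star s) * (s * y * star s) =
      s * c * star s * (s * (x * y) * star s) := by
  have hss : ∀ z : A, star s * (s * z) = z := fun z => by rw [← mul_assoc, hs, one_mul]
  have hxc' : ∀ z : A, x * (c * z) = c * (x * z) := fun z => by
    rw [← mul_assoc, hxc.eq, mul_assoc]
  simp only [mul_assoc, hss, hxc']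

namespace IsometryConj

variable {A : Type*} [Semiring A] [StarRing A] {ι : Type*} [Fintype ι]

def conjSum (a : ι → A) (s x : A) : A :=
  ∑ i, a i * (s * x * star s) * star (a i)

theorem conjSum_add (a : ι → A) (s x y : A) :
    conjSum a s (x + y) = conjSum a s x + conjSum a s y := by
  simp only [conjSum, mul_add, add_mul, Finset.sum_add_distrib]

theorem conjSum_smul {R : Type*} [Monoid R] [DistribMulAction R A] [IsScalarTower R A A]
    [SMulCommClass R A A] (a : ι → A) (s : A) (c : R) (x : A) :
    conjSum a s (c • x) = c • conjSum a s x := by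
  simp only [conjSum, Finset.smul_sum, mul_smul_comm, smul_mul_assoc]

theorem conjSum_one (a : ι → A) (s : A) (h : ∑ i, a i * (s * star s) * star (a i) = 1) :
    conjSum a s 1 = 1 := by
  simpa only [conjSum, mul_one] using h

theorem conjSum_star (a : ι → A) (s x : A) :
    conjSum a s (star x) = star (conjSum a s x) := by
  simp only [conjSum, star_sum, star_mul, star_star, mul_assoc]

theorem conjSum_mul (a : ι → A) {s : A} (hs : star s * s = 1) {x : A} (y : A)
    (hcross : ∀ i j, ∃ c, star (a i) * a j = s * c * star s ∧ Commute x c)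
    (hunit : ∑ i, a i * star (a i) = 1) :
    conjSum a s (x * y) = conjSum a s x * conjSum a s y := by
  have hterm : ∀ i j,
      a i * (s * x * star s) * star (a i) * (a j * (s * y * star s) * star (a j)) =
        a i * star (a i) * (a j * (s * (x * y) * star s) * star (a j)) := fun i j => by
    obtain ⟨c, hc, hxc⟩ := hcross i j
    calc _ = a i * ((s * x * star s) * (star (a i) * a j) * (s * y * star s)) * star (a j) := by
          simp only [mul_assoc]
      _ = a i * ((s * c * star s) * (s * (x * y) * star s)) * star (a j) := by
          rw [hc, conj_mul_conj_mul_conj hs hxc]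
      _ = _ := by rw [← hc]; simp only [mul_assoc]
  calc conjSum a s (x * y) = (∑ i, a i * star (a i)) * conjSum a s (x * y) := by
        rw [hunit, one_mul]
    _ = conjSum a s x * conjSum a s y := by
      simp only [conjSum, Finset.sum_mul_sum, hterm]

end IsometryConj

theorem star_mul_eq_proj_mul_proj {A : Type*} [Semigroup A] [StarMul A] {p a b : A}
    (hp : IsSelfAdjoint p) (ha : a * p = a) (hb : b * p = b) :
    p * (star a * b) * p = star a * b := by
  have hpa : p * star a = star a := by rw [← hp.star_eq, ← star_mul, ha]
  rw [← mul_assoc p, hpa, mul_assoc, hb]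

open IsometryConj in
theorem sigma_restriction_unital_star_hom_general
    {A : Type*} [NormedRing A] [StarRing A]
    [NormedAlgebra ℂ A] [StarModule ℂ A]
    -- the increasing sequence of finite-dimensional unital C*-subalgebras
    (B : ℕ → StarSubalgebra ℂ A)
    -- the isometry s and the projection p = ss*
    (s : A) (hs : star s * s = 1)
    (p : A) (hp : p = s * star s)
    (hpBNp : ∀ N : ℕ, ∀ b ∈ B N, ∃ c ∈ B (N + 1), p * b * p = s * c * star s)
    -- the elements a_1, ..., a_r of B_1 and the map σ
    {r : ℕ} (a : Fin r → A) (haB1 : ∀ i, a i ∈ B 1)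
    (hasum : ∑ i, a i * p * star (a i) = 1)
    (hap : ∀ i, a i * p = a i)
    (σ : A → A)
    (hσ : ∀ x : A, σ x = ∑ i, a i * (s * x * star s) * star (a i))
    :
    (∀ x y : A, σ (x + y) = σ x + σ y) ∧
    (∀ (c : ℂ) (x : A), σ (c • x) = c • σ x) ∧
    σ 1 = 1 ∧
    (∀ x : A, σ (star x) = star (σ x)) ∧
    (∀ x y : A, (∀ b ∈ B 2, x * b = b * x) → (∀ b ∈ B 2, y * b = b * y) →
      σ (x * y) = σ x * σ y) := by
  obtain rfl : σ = conjSum a s := funext hσ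
  have hpsa : IsSelfAdjoint p := by rw [hp]; exact IsSelfAdjoint.mul_star_self s
  refine ⟨conjSum_add a s, conjSum_smul a s, conjSum_one a s (hp ▸ hasum), conjSum_star a s,
    fun x y hx _ => conjSum_mul a hs y (fun i j => ?_) (by simpa only [hap] using hasum)⟩
  obtain ⟨c, hcB, hc⟩ := hpBNp 1 _ (mul_mem (star_mem (haB1 i)) (haB1 j))
  exact ⟨c, by rw [← hc, star_mul_eq_proj_mul_proj hpsa (hap i) (hap j)], hx c hcB⟩

/-- Under the crossed-product setup `A ≅ B ⋊_ρ ℕ`, the restriction of `σ` to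
`A ∩ B₂′` is a unital \*-homomorphism: `σ` is linear, `σ 1 = 1`,
`σ (star x) = star (σ x)` for every `x ∈ A`, and `σ (x * y) = σ x * σ y`
whenever `x` and `y` commute with every element of `B 2`. -/
theorem sigma_restriction_unital_star_hom
    {A : Type*} [NormedRing A] [StarRing A] [CStarRing A] [CompleteSpace A]
    [NormedAlgebra ℂ A] [StarModule ℂ A] [PartialOrder A] [StarOrderedRing A]
    -- the increasing sequence of finite-dimensional unital C*-subalgebras
    (B : ℕ → StarSubalgebra ℂ A)
    (hBmono : ∀ N : ℕ, B N ≤ B (N + 1))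
    (hBfd : ∀ N : ℕ, FiniteDimensional ℂ (B N))
    -- Bc is the norm closure of the union of the B_N, assumed simple
    (Bc : StarSubalgebra ℂ A)
    (hBc : (Bc : Set A) = closure (⋃ N : ℕ, (B N : Set A)))
    (hBsimple : ∀ I : TwoSidedIdeal Bc, IsClosed (I : Set Bc) → I = ⊥ ∨ I = ⊤)
    -- the isometry s and the projection p = ss*
    (s : A) (hs : star s * s = 1)
    (p : A) (hp : p = s * star s) (hpne : p ≠ 1) (hpB1 : p ∈ B 1)
    (hsBN : ∀ N : ℕ, ∀ b ∈ B N, s * b * star s ∈ B (N + 1))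
    (hpBNp : ∀ N : ℕ, ∀ b ∈ B N, ∃ c ∈ B (N + 1), p * b * p = s * c * star s)
    (hsBc : ∀ b ∈ Bc, ∃ c ∈ Bc, s * b * star s = p * c * p)
    (hpBcp : ∀ b ∈ Bc, ∃ c ∈ Bc, p * b * p = s * c * star s)
    -- A is generated as a C*-algebra by Bc together with s
    (hgen : (StarAlgebra.adjoin ℂ ((Bc : Set A) ∪ {s})).topologicalClosure = ⊤)
    -- A is simple and purely infinite
    (hAsimple : ∀ I : TwoSidedIdeal A, IsClosed (I : Set A) → I = ⊥ ∨ I = ⊤)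
    (hApi : ∀ a : A, 0 ≤ a → a ≠ 0 → ∃ x : A, x * a * star x = 1)
    -- the elements a_1, ..., a_r of B_1 and the map σ
    {r : ℕ} (a : Fin r → A) (haB1 : ∀ i, a i ∈ B 1)
    (hasum : ∑ i, a i * p * star (a i) = 1)
    (hap : ∀ i, a i * p = a i)
    (σ : A → A)
    (hσ : ∀ x : A, σ x = ∑ i, a i * (s * x * star s) * star (a i))
    :
    (∀ x y : A, σ (x + y) = σ x + σ y) ∧
    (∀ (c : ℂ) (x : A), σ (c • x) = c • σ x) ∧
    σ 1 = 1 ∧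
    (∀ x : A, σ (star x) = star (σ x)) ∧
    (∀ x y : A, (∀ b ∈ B 2, x * b = b * x) → (∀ b ∈ B 2, y * b = b * y) →
      σ (x * y) = σ x * σ y) :=
  sigma_restriction_unital_star_hom_general B s hs p hp hpBNp a haB1 hasum hap σ hσ
end

section
/- Under the stated setup, σ(A ∩ B_{N+1}′) ⊆ A ∩ B_N′ for every N ≥ 1; that is, if x ∈ A commutes with every element of B_{N+1}, then σ(x) commutes with every element of B_N. -/
/-! With `u i = a i * s` and `v i = star s * star (a i)` one has `σ x = ∑ i, u i * x * v i` and
`∑ i, u i * v i = 1`. Inserting this partition of unity next to `b` turns `σ x * b` and `b * σ x`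
into the double sums of `u i * x * (v i * b * u j) * v j` and `u i * (v i * b * u j) * x * v j`.
The middle factors agree with the compressions `star s * (p * (star (a i) * b * a j) * p) * s`,
which lie in `B (N + 1)` because `p B_N p ⊆ s B_{N+1} s*`, so they commute with `x`. -/

theorem Commute.sum_mul_mul_of_sum_mul_eq_one {R ι : Type*} [Semiring R] [Fintype ι]
    {u v : ι → R} (huv : ∑ i, u i * v i = 1) {x b : R}
    (hx : ∀ i j, Commute x (v i * b * u j)) :
    Commute (∑ i, u i * x * v i) b := by
  calc (∑ i, u i * x * v i) * b
      = (∑ i, u i * x * v i) * b * ∑ j, u j * v j := by rw [huv, mul_one]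
    _ = ∑ j, ∑ i, u i * (x * (v i * b * u j)) * v j := by
        simp only [Finset.sum_mul, Finset.mul_sum, mul_assoc]
    _ = ∑ j, ∑ i, u i * ((v i * b * u j) * x) * v j := by simp only [(hx _ _).eq]
    _ = (∑ i, u i * v i) * b * ∑ j, u j * x * v j := by
        simp only [Finset.sum_mul, Finset.mul_sum, mul_assoc]
    _ = b * ∑ i, u i * x * v i := by rw [huv, one_mul]

theorem mul_mul_eq_of_compress_eq {M : Type*} [Monoid M] {s t y c : M} (hts : t * s = 1)
    (h : s * t * y * (s * t) = s * c * t) : t * y * s = c := by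
  have cancel : ∀ z, t * (s * z) = z := fun z => by rw [← mul_assoc, hts, one_mul]
  calc t * y * s = t * (s * t * y * (s * t)) * s := by simp only [mul_assoc, cancel, hts, mul_one]
    _ = c := by rw [h]; simp only [mul_assoc, cancel, hts, mul_one]

theorem sigma_maps_commutant_into_commutant_general
    {A : Type*} [NormedRing A] [StarRing A]
    [NormedAlgebra ℂ A] [StarModule ℂ A]
    -- the increasing sequence of finite-dimensional unital C*-subalgebras
    (B : ℕ → StarSubalgebra ℂ A)
    (hBmono : ∀ N : ℕ, B N ≤ B (N + 1))
    -- the isometry s and the projection p = ss*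
    (s : A) (hs : star s * s = 1)
    (p : A) (hp : p = s * star s)
    (hpBNp : ∀ N : ℕ, ∀ b ∈ B N, ∃ c ∈ B (N + 1), p * b * p = s * c * star s)
    -- the elements a_1, ..., a_r of B_1 and the map σ
    {r : ℕ} (a : Fin r → A) (haB1 : ∀ i, a i ∈ B 1)
    (hasum : ∑ i, a i * p * star (a i) = 1)
    (σ : A → A)
    (hσ : ∀ x : A, σ x = ∑ i, a i * (s * x * star s) * star (a i))
    :
    ∀ N : ℕ, 1 ≤ N → ∀ x : A, (∀ b ∈ B (N + 1), x * b = b * x) →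
      ∀ b ∈ B N, σ x * b = b * σ x := by
  subst hp
  intro N hN x hx b hb
  have haN : ∀ i, a i ∈ B N := fun i => monotone_nat_of_le_succ hBmono hN (haB1 i)
  have hunit : ∑ i, a i * s * (star s * star (a i)) = 1 := by
    simpa only [mul_assoc] using hasum
  have hcomm : ∀ i j, Commute x (star s * star (a i) * b * (a j * s)) := by
    intro i j
    obtain ⟨c, hc, hcompress⟩ :=
      hpBNp N _ (mul_mem (mul_mem (star_mem (haN i)) hb) (haN j))
    have hcs : star s * star (a i) * b * (a j * s) = c := by
      rw [← mul_mul_eq_of_compress_eq hs hcompress]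
      simp only [mul_assoc]
    rw [hcs]
    exact hx c hc
  rw [hσ]
  simpa only [mul_assoc] using (Commute.sum_mul_mul_of_sum_mul_eq_one hunit hcomm).eq

/-- Under the crossed-product setup `A ≅ B ⋊_ρ ℕ`, one has
`σ (A ∩ B_{N+1}′) ⊆ A ∩ B_N′` for every `N ≥ 1`: if `x ∈ A` commutes with
every element of `B (N+1)`, then `σ x` commutes with every element of `B N`. -/
theorem sigma_maps_commutant_into_commutant
    {A : Type*} [NormedRing A] [StarRing A] [CStarRing A] [CompleteSpace A]
    [NormedAlgebra ℂ A] [StarModule ℂ A] [PartialOrder A] [StarOrderedRing A]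
    -- the increasing sequence of finite-dimensional unital C*-subalgebras
    (B : ℕ → StarSubalgebra ℂ A)
    (hBmono : ∀ N : ℕ, B N ≤ B (N + 1))
    (hBfd : ∀ N : ℕ, FiniteDimensional ℂ (B N))
    -- Bc is the norm closure of the union of the B_N, assumed simple
    (Bc : StarSubalgebra ℂ A)
    (hBc : (Bc : Set A) = closure (⋃ N : ℕ, (B N : Set A)))
    (hBsimple : ∀ I : TwoSidedIdeal Bc, IsClosed (I : Set Bc) → I = ⊥ ∨ I = ⊤)
    -- the isometry s and the projection p = ss*
    (s : A) (hs : star s * s = 1)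
    (p : A) (hp : p = s * star s) (hpne : p ≠ 1) (hpB1 : p ∈ B 1)
    (hsBN : ∀ N : ℕ, ∀ b ∈ B N, s * b * star s ∈ B (N + 1))
    (hpBNp : ∀ N : ℕ, ∀ b ∈ B N, ∃ c ∈ B (N + 1), p * b * p = s * c * star s)
    (hsBc : ∀ b ∈ Bc, ∃ c ∈ Bc, s * b * star s = p * c * p)
    (hpBcp : ∀ b ∈ Bc, ∃ c ∈ Bc, p * b * p = s * c * star s)
    -- A is generated as a C*-algebra by Bc together with s
    (hgen : (StarAlgebra.adjoin ℂ ((Bc : Set A) ∪ {s})).topologicalClosure = ⊤)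
    -- A is simple and purely infinite
    (hAsimple : ∀ I : TwoSidedIdeal A, IsClosed (I : Set A) → I = ⊥ ∨ I = ⊤)
    (hApi : ∀ a : A, 0 ≤ a → a ≠ 0 → ∃ x : A, x * a * star x = 1)
    -- the elements a_1, ..., a_r of B_1 and the map σ
    {r : ℕ} (a : Fin r → A) (haB1 : ∀ i, a i ∈ B 1)
    (hasum : ∑ i, a i * p * star (a i) = 1)
    (hap : ∀ i, a i * p = a i)
    (σ : A → A)
    (hσ : ∀ x : A, σ x = ∑ i, a i * (s * x * star s) * star (a i))
    :
    ∀ N : ℕ, 1 ≤ N → ∀ x : A, (∀ b ∈ B (N + 1), x * b = b * x) →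
      ∀ b ∈ B N, σ x * b = b * σ x :=
  sigma_maps_commutant_into_commutant_general B hBmono s hs p hp hpBNp a haB1 hasum σ hσ
end

section
/- Under the stated setup, for every j ≥ 1 and every x ∈ A commuting with every element of B_{j+1}, one has s^j x s*^j = σ^j(x) s^j s*^j = s^j s*^j σ^j(x), where σ^j denotes the j-fold iterate of σ. -/
/-! With `p = s s*` and `y = s x s*`, the relation `p b p = s c s*` turns "`x` commutes with
`B (N+1)`" into "`y` commutes with the corners `p B_N p`". Since `y = p y p`, this gives
`y e p = p e y` for every `e ∈ B_N`, and inserting `1 = ∑ aᵢ p aᵢ*` on either side of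
`σ(x) b` shows that `σ(x) = ∑ aᵢ y aᵢ*` commutes with `B_N` and that `σ(x) p = y`.
Induction on `j` then gives `s^j x s*^j = σ^j(x) s^j s*^j`; the other identity is its adjoint
applied to `x*`. -/

open Finset

theorem mul_mul_eq_of_commute_corner {M : Type*} [Monoid M] {p y e : M} (hpy : p * y = y)
    (hyp : y * p = y) (h : Commute y (p * e * p)) : y * e * p = p * e * y := by
  calc y * e * p = y * p * e * p := by rw [hyp]
    _ = y * (p * e * p) := by simp only [mul_assoc]
    _ = p * e * p * y := h.eq
    _ = p * e * y := by rw [mul_assoc _ p, hpy]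

section Isometry

variable {M : Type*} [Monoid M] [StarMul M] {s : M}

theorem conj_mul_conj (hs : star s * s = 1) (u v : M) :
    s * u * star s * (s * v * star s) = s * (u * v) * star s := by
  simp only [mul_assoc]
  rw [← mul_assoc (star s), hs, one_mul]

theorem proj_mul_conj (hs : star s * s = 1) (u : M) :
    s * star s * (s * u * star s) = s * u * star s := by
  simpa using conj_mul_conj hs 1 u

theorem conj_mul_proj (hs : star s * s = 1) (u : M) :
    s * u * star s * (s * star s) = s * u * star s := by
  simpa using conj_mul_conj hs u 1

theorem conj_pow_succ (x : M) (n : ℕ) :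
    s ^ (n + 1) * x * star (s ^ (n + 1)) = s * (s ^ n * x * star (s ^ n)) * star s := by
  simp only [pow_succ', star_mul, mul_assoc]

theorem commute_conj_of_commute (hs : star s * s = 1) {x c : M} (h : Commute x c) :
    Commute (s * x * star s) (s * c * star s) := by
  rw [Commute, SemiconjBy, conj_mul_conj hs, conj_mul_conj hs, h.eq]

theorem commute_corner_of_mem_centralizer (hs : star s * s = 1) {S T : Set M}
    (hcorner : ∀ e ∈ S, ∃ c ∈ T, s * star s * e * (s * star s) = s * c * star s)
    {x : M} (hx : x ∈ T.centralizer) {e : M} (he : e ∈ S) :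
    Commute (s * x * star s) (s * star s * e * (s * star s)) := by
  obtain ⟨c, hcT, hc⟩ := hcorner e he
  rw [hc]
  exact commute_conj_of_commute hs (hx c hcT).symm

end Isometry

section ConjSum

variable {A ι : Type*} [Semiring A] [Star A] [Fintype ι]

def conjSum (a : ι → A) (y : A) : A := ∑ i, a i * y * star (a i)

def shiftedConjSum (a : ι → A) (s x : A) : A := conjSum a (s * x * star s)

variable {a : ι → A} {p y : A}

theorem conjSum_mul_eq_self (hsum : ∑ i, a i * p * star (a i) = 1) (hpy : p * y = y)
    (hyp : y * p = y) (hcomm : ∀ i, Commute y (p * star (a i) * p)) :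
    conjSum a y * p = y := by
  calc conjSum a y * p = ∑ i, a i * (y * star (a i) * p) := by
        simp only [conjSum, sum_mul, mul_assoc]
    _ = ∑ i, a i * (p * star (a i) * y) := by
        simp only [mul_mul_eq_of_commute_corner hpy hyp (hcomm _)]
    _ = y := by simp only [← mul_assoc, ← sum_mul, hsum, one_mul]

theorem commute_conjSum (hsum : ∑ i, a i * p * star (a i) = 1) (hpy : p * y = y)
    (hyp : y * p = y) {b : A} (hcomm : ∀ i k, Commute y (p * (star (a i) * b * a k) * p)) :
    Commute (conjSum a y) b := by
  have hterm : ∀ i k, a i * y * star (a i) * (b * (a k * p * star (a k))) =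
      a i * p * star (a i) * (b * (a k * y * star (a k))) := fun i k => by
    have h := mul_mul_eq_of_commute_corner hpy hyp (hcomm i k)
    calc _ = a i * (y * (star (a i) * b * a k) * p) * star (a k) := by simp only [mul_assoc]
      _ = a i * (p * (star (a i) * b * a k) * y) * star (a k) := by rw [h]
      _ = _ := by simp only [mul_assoc]
  calc conjSum a y * b = ∑ i, ∑ k, a i * y * star (a i) * (b * (a k * p * star (a k))) := by
        simp only [conjSum, ← mul_sum, hsum, mul_one, sum_mul]
    _ = ∑ i, ∑ k, a i * p * star (a i) * (b * (a k * y * star (a k))) := by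
        simp only [hterm]
    _ = b * conjSum a y := by
        rw [← sum_mul_sum, hsum, one_mul, conjSum, mul_sum]

end ConjSum

theorem star_conjSum {A ι : Type*} [Semiring A] [StarRing A] [Fintype ι] (a : ι → A) (y : A) :
    star (conjSum a y) = conjSum a (star y) := by
  simp only [conjSum, star_sum, star_mul, star_star, mul_assoc]

theorem star_iterate_shiftedConjSum {A ι : Type*} [Semiring A] [StarRing A] [Fintype ι]
    (a : ι → A) (s : A) (n : ℕ) :
    Function.Commute star (shiftedConjSum a s)^[n] :=
  Function.Commute.iterate_right (fun x => by
    simp only [shiftedConjSum, star_conjSum, star_mul, star_star, mul_assoc]) n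

section Filtration

variable {R A ι : Type*} [CommSemiring R] [StarRing R] [Semiring A] [StarRing A]
  [Algebra R A] [StarModule R A] [Fintype ι]
  {B : ℕ → StarSubalgebra R A} {s : A} {a : ι → A}

theorem shiftedConjSum_mem_centralizer (hs : star s * s = 1) {N : ℕ}
    (hcorner : ∀ b ∈ B N, ∃ c ∈ B (N + 1), s * star s * b * (s * star s) = s * c * star s)
    (haBN : ∀ i, a i ∈ B N) (hsum : ∑ i, a i * (s * star s) * star (a i) = 1)
    {x : A} (hx : x ∈ (B (N + 1) : Set A).centralizer) :
    shiftedConjSum a s x ∈ (B N : Set A).centralizer := fun _ hb =>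
  (commute_conjSum hsum (proj_mul_conj hs x) (conj_mul_proj hs x) fun i k =>
    commute_corner_of_mem_centralizer hs hcorner hx
      (mul_mem (mul_mem (star_mem (haBN i)) hb) (haBN k))).eq.symm

theorem iterate_shiftedConjSum_mem_centralizer (hBmono : Monotone B) (hs : star s * s = 1)
    (hcorner : ∀ N, ∀ b ∈ B N, ∃ c ∈ B (N + 1),
      s * star s * b * (s * star s) = s * c * star s)
    (haB1 : ∀ i, a i ∈ B 1) (hsum : ∑ i, a i * (s * star s) * star (a i) = 1)
    {N : ℕ} (hN : 1 ≤ N) (k : ℕ) {x : A} (hx : x ∈ (B (N + k) : Set A).centralizer) :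
    (shiftedConjSum a s)^[k] x ∈ (B N : Set A).centralizer := by
  induction k generalizing x with
  | zero => exact hx
  | succ k ih =>
    rw [Function.iterate_succ_apply]
    refine ih (shiftedConjSum_mem_centralizer hs (hcorner _) (fun i => hBmono ?_ (haB1 i)) hsum ?_)
    · omega
    · rwa [add_assoc]

theorem conj_eq_shiftedConjSum_mul_proj (hs : star s * s = 1)
    (hcorner : ∀ b ∈ B 1, ∃ c ∈ B 2, s * star s * b * (s * star s) = s * c * star s)
    (haB1 : ∀ i, a i ∈ B 1) (hsum : ∑ i, a i * (s * star s) * star (a i) = 1)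
    {x : A} (hx : x ∈ (B 2 : Set A).centralizer) :
    s * x * star s = shiftedConjSum a s x * (s * star s) :=
  (conjSum_mul_eq_self hsum (proj_mul_conj hs x) (conj_mul_proj hs x) fun i =>
    commute_corner_of_mem_centralizer hs hcorner hx (star_mem (haB1 i))).symm

theorem pow_conj_eq_iterate_shiftedConjSum_mul (hBmono : Monotone B) (hs : star s * s = 1)
    (hcorner : ∀ N, ∀ b ∈ B N, ∃ c ∈ B (N + 1),
      s * star s * b * (s * star s) = s * c * star s)
    (haB1 : ∀ i, a i ∈ B 1) (hsum : ∑ i, a i * (s * star s) * star (a i) = 1)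
    {j : ℕ} (hj : 1 ≤ j) {x : A} (hx : x ∈ (B (j + 1) : Set A).centralizer) :
    s ^ j * x * star (s ^ j) = (shiftedConjSum a s)^[j] x * (s ^ j * star (s ^ j)) := by
  induction j, hj using Nat.le_induction with
  | base =>
    simpa using conj_eq_shiftedConjSum_mul_proj hs (hcorner 1) haB1 hsum hx
  | succ j hj ih =>
    have hσj : (shiftedConjSum a s)^[j] x ∈ (B 2 : Set A).centralizer :=
      iterate_shiftedConjSum_mem_centralizer hBmono hs hcorner haB1 hsum one_le_two j
        (by rwa [add_comm])
    calc s ^ (j + 1) * x * star (s ^ (j + 1))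
        = s * ((shiftedConjSum a s)^[j] x * (s ^ j * star (s ^ j))) * star s := by
          rw [conj_pow_succ, ih (fun b hb => hx b (hBmono (by omega) hb))]
      _ = shiftedConjSum a s ((shiftedConjSum a s)^[j] x) * (s * star s) *
            (s * (s ^ j * star (s ^ j)) * star s) := by
          rw [← conj_mul_conj hs, conj_eq_shiftedConjSum_mul_proj hs (hcorner 1) haB1 hsum hσj]
      _ = (shiftedConjSum a s)^[j + 1] x * (s ^ (j + 1) * star (s ^ (j + 1))) := by
          rw [mul_assoc, proj_mul_conj hs, Function.iterate_succ_apply']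
          congr 1
          simpa using (conj_pow_succ (s := s) 1 j).symm

end Filtration

theorem sj_x_sj_star_eq_sigma_iterate_general
    {A : Type*} [NormedRing A] [StarRing A]
    [NormedAlgebra ℂ A] [StarModule ℂ A]
    -- the increasing sequence of finite-dimensional unital C*-subalgebras
    (B : ℕ → StarSubalgebra ℂ A)
    (hBmono : ∀ N : ℕ, B N ≤ B (N + 1))
    -- the isometry s and the projection p = ss*
    (s : A) (hs : star s * s = 1)
    (p : A) (hp : p = s * star s)
    (hpBNp : ∀ N : ℕ, ∀ b ∈ B N, ∃ c ∈ B (N + 1), p * b * p = s * c * star s)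
    -- the elements a_1, ..., a_r of B_1 and the map σ
    {r : ℕ} (a : Fin r → A) (haB1 : ∀ i, a i ∈ B 1)
    (hasum : ∑ i, a i * p * star (a i) = 1)
    (σ : A → A)
    (hσ : ∀ x : A, σ x = ∑ i, a i * (s * x * star s) * star (a i))
    :
    ∀ j : ℕ, 1 ≤ j → ∀ x : A, (∀ b ∈ B (j + 1), x * b = b * x) →
      s ^ j * x * star (s ^ j) = σ^[j] x * (s ^ j * star (s ^ j)) ∧
      s ^ j * x * star (s ^ j) = (s ^ j * star (s ^ j)) * σ^[j] x := by
  subst hp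
  obtain rfl : σ = shiftedConjSum a s := funext hσ
  intro j hj x hx
  have hmono : Monotone B := monotone_nat_of_le_succ hBmono
  have hxc : x ∈ (B (j + 1) : Set A).centralizer := fun b hb => (hx b hb).symm
  have hxc' : star x ∈ (B (j + 1) : Set A).centralizer :=
    Set.star_mem_centralizer' (fun _ => star_mem) hxc
  refine ⟨pow_conj_eq_iterate_shiftedConjSum_mul hmono hs hpBNp haB1 hasum hj hxc, ?_⟩
  have h := congrArg star (pow_conj_eq_iterate_shiftedConjSum_mul hmono hs hpBNp haB1 hasum hj hxc')
  simpa only [star_mul, star_star, mul_assoc, star_iterate_shiftedConjSum a s j (star x)] using h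

/-- Under the crossed-product setup `A ≅ B ⋊_ρ ℕ`, for every `j ≥ 1` and every
`x ∈ A` commuting with every element of `B (j+1)`, one has
`s^j x (s*)^j = σ^j(x) s^j (s*)^j = s^j (s*)^j σ^j(x)`. -/
theorem sj_x_sj_star_eq_sigma_iterate
    {A : Type*} [NormedRing A] [StarRing A] [CStarRing A] [CompleteSpace A]
    [NormedAlgebra ℂ A] [StarModule ℂ A] [PartialOrder A] [StarOrderedRing A]
    -- the increasing sequence of finite-dimensional unital C*-subalgebras
    (B : ℕ → StarSubalgebra ℂ A)
    (hBmono : ∀ N : ℕ, B N ≤ B (N + 1))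
    (hBfd : ∀ N : ℕ, FiniteDimensional ℂ (B N))
    -- Bc is the norm closure of the union of the B_N, assumed simple
    (Bc : StarSubalgebra ℂ A)
    (hBc : (Bc : Set A) = closure (⋃ N : ℕ, (B N : Set A)))
    (hBsimple : ∀ I : TwoSidedIdeal Bc, IsClosed (I : Set Bc) → I = ⊥ ∨ I = ⊤)
    -- the isometry s and the projection p = ss*
    (s : A) (hs : star s * s = 1)
    (p : A) (hp : p = s * star s) (hpne : p ≠ 1) (hpB1 : p ∈ B 1)
    (hsBN : ∀ N : ℕ, ∀ b ∈ B N, s * b * star s ∈ B (N + 1))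
    (hpBNp : ∀ N : ℕ, ∀ b ∈ B N, ∃ c ∈ B (N + 1), p * b * p = s * c * star s)
    (hsBc : ∀ b ∈ Bc, ∃ c ∈ Bc, s * b * star s = p * c * p)
    (hpBcp : ∀ b ∈ Bc, ∃ c ∈ Bc, p * b * p = s * c * star s)
    -- A is generated as a C*-algebra by Bc together with s
    (hgen : (StarAlgebra.adjoin ℂ ((Bc : Set A) ∪ {s})).topologicalClosure = ⊤)
    -- A is simple and purely infinite
    (hAsimple : ∀ I : TwoSidedIdeal A, IsClosed (I : Set A) → I = ⊥ ∨ I = ⊤)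
    (hApi : ∀ a : A, 0 ≤ a → a ≠ 0 → ∃ x : A, x * a * star x = 1)
    -- the elements a_1, ..., a_r of B_1 and the map σ
    {r : ℕ} (a : Fin r → A) (haB1 : ∀ i, a i ∈ B 1)
    (hasum : ∑ i, a i * p * star (a i) = 1)
    (hap : ∀ i, a i * p = a i)
    (σ : A → A)
    (hσ : ∀ x : A, σ x = ∑ i, a i * (s * x * star s) * star (a i))
    :
    ∀ j : ℕ, 1 ≤ j → ∀ x : A, (∀ b ∈ B (j + 1), x * b = b * x) →
      s ^ j * x * star (s ^ j) = σ^[j] x * (s ^ j * star (s ^ j)) ∧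
      s ^ j * x * star (s ^ j) = (s ^ j * star (s ^ j)) * σ^[j] x :=
  sj_x_sj_star_eq_sigma_iterate_general B hBmono s hs p hp hpBNp a haB1 hasum σ hσ
end

section
/- Under the stated setup, let N be a positive integer and let p^{(1)},…,p^{(J)} be the minimal central projections of B_N, so that Σ_j p^{(j)} = 1. Then there exists an integer N_1 ≥ N such that for every integer l ≥ 0, every nonzero projection q ∈ A ∩ B_{N_1+l}′, and every j ∈ {1,…,J}, one has p^{(j)} σ^l(q) p^{(j)} ≠ 0. -/
/-!
Since `Bc` is simple, the closed ideal of `Bc` generated by `P j` is everything, so `1` lies within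
distance `< 1` of some `∑ₖ xₖ (P j) yₖ` with all `xₖ, yₖ` in a single finite stage `B M`; take `N₁`
beyond all these stages. If `q` commutes with `B (M + 1)`, `M ≥ 1`, then `σ q` commutes with `B M`,
because each `aᵢ* b aₖ` (`b ∈ B M`) is a compression `p c p = s d s*` with `d ∈ B (M + 1)`, and
`s* σ(q) s = q`, so `σ q ≠ 0`. Thus `σ^l q` is nonzero and commutes with `B N₁`. If
`P j σ^l(q) P j = 0`, then `σ^l(q) P j = 0`, so `σ^l(q)` kills `∑ₖ xₖ (P j) yₖ`, an element at
distance `< 1` from `1`; this forces `σ^l q = 0`.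
-/

open Filter

/-- For a unital subring `X ∋ e` this is the two-sided ideal of `X` generated by `e`. -/
def sandwichSpan {R : Type*} [Ring R] (X : Set R) (e : R) : AddSubgroup R :=
  AddSubgroup.closure (Set.image2 (fun x y => x * e * y) X X)

section sandwichSpan

variable {R : Type*} [Ring R] {X Y : Set R} {e : R}

theorem mem_sandwichSpan_self (h1 : (1 : R) ∈ X) : e ∈ sandwichSpan X e :=
  AddSubgroup.subset_closure ⟨1, h1, 1, h1, by simp⟩

theorem sandwichSpan_mono (h : X ⊆ Y) : sandwichSpan X e ≤ sandwichSpan Y e :=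
  AddSubgroup.closure_mono (Set.image2_subset h h)

theorem mul_mem_sandwichSpan_left (hX : ∀ x ∈ X, ∀ y ∈ X, x * y ∈ X) {z w : R} (hz : z ∈ X)
    (hw : w ∈ sandwichSpan X e) : z * w ∈ sandwichSpan X e := by
  suffices sandwichSpan X e ≤ (sandwichSpan X e).comap (AddMonoidHom.mulLeft z) from this hw
  refine (AddSubgroup.closure_le _).2 ?_
  rintro _ ⟨x, hx, y, hy, rfl⟩
  exact AddSubgroup.subset_closure ⟨z * x, hX z hz x hx, y, hy, by simp [mul_assoc]⟩

theorem mul_mem_sandwichSpan_right (hX : ∀ x ∈ X, ∀ y ∈ X, x * y ∈ X) {z w : R} (hz : z ∈ X)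
    (hw : w ∈ sandwichSpan X e) : w * z ∈ sandwichSpan X e := by
  suffices sandwichSpan X e ≤ (sandwichSpan X e).comap (AddMonoidHom.mulRight z) from this hw
  refine (AddSubgroup.closure_le _).2 ?_
  rintro _ ⟨x, hx, y, hy, rfl⟩
  exact AddSubgroup.subset_closure ⟨x, hx, y * z, hX y hy z hz, by simp [mul_assoc]⟩

theorem mul_eq_zero_of_mem_sandwichSpan {q w : R} (hq : ∀ x ∈ X, Commute q x) (hqe : q * e = 0)
    (hw : w ∈ sandwichSpan X e) : q * w = 0 := by
  suffices sandwichSpan X e ≤ (AddMonoidHom.mulLeft q).ker from this hw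
  refine (AddSubgroup.closure_le _).2 ?_
  rintro _ ⟨x, hx, y, _, rfl⟩
  change q * (x * e * y) = 0
  rw [← mul_assoc, ← mul_assoc, (hq x hx).eq, mul_assoc x, hqe, mul_zero, zero_mul]

end sandwichSpan

theorem one_mem_of_isClosed_twoSidedIdeal_eq_bot_or_top {R S : Type*} [Ring R] [TopologicalSpace R]
    [SetLike S R] [SubringClass S R] {T : S}
    (hT : ∀ I : TwoSidedIdeal T, IsClosed (I : Set T) → I = ⊥ ∨ I = ⊤)
    (K : AddSubgroup R) (hK : IsClosed (K : Set R))
    (hl : ∀ z ∈ T, ∀ w ∈ K, z * w ∈ K) (hr : ∀ z ∈ T, ∀ w ∈ K, w * z ∈ K)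
    {e : R} (heT : e ∈ T) (heK : e ∈ K) (he : e ≠ 0) : (1 : R) ∈ K := by
  let I : TwoSidedIdeal T := .mk' {z | (z : R) ∈ K} K.zero_mem K.add_mem K.neg_mem
    (fun {x _} hy => hl x x.2 _ hy) (fun {_ y} hx => hr y y.2 _ hx)
  have hmem (z : T) : z ∈ I ↔ (z : R) ∈ K := TwoSidedIdeal.mem_mk' ..
  have hI : IsClosed (I : Set T) := by
    rw [TwoSidedIdeal.coe_mk']
    exact hK.preimage continuous_subtype_val
  rcases hT I hI with hbot | htop
  · have : (⟨e, heT⟩ : T) ∈ I := (hmem _).2 heK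
    rw [hbot, TwoSidedIdeal.mem_bot] at this
    exact absurd (congrArg Subtype.val this) he
  · exact (hmem 1).1 (htop ▸ TwoSidedIdeal.mem_top T)

theorem eq_zero_of_mul_eq_zero_of_norm_one_sub_lt_one {R : Type*} [NormedRing R] {q u : R}
    (hqu : q * u = 0) (hu : ‖1 - u‖ < 1) : q = 0 := by
  have : ‖q‖ ≤ ‖q‖ * ‖1 - u‖ := by
    simpa [mul_sub, hqu] using norm_mul_le q (1 - u)
  by_contra hq
  nlinarith [norm_pos_iff.2 hq]

theorem eventually_exists_mem_sandwichSpan_norm_one_sub_lt_one {A S : Type*} [NormedRing A]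
    [SetLike S A] [SubringClass S A] {B : ℕ → S} (hB : Monotone fun N => (B N : Set A)) {Bc : S}
    (hBc : (Bc : Set A) = closure (⋃ N, (B N : Set A)))
    (hBc_simple : ∀ I : TwoSidedIdeal Bc, IsClosed (I : Set Bc) → I = ⊥ ∨ I = ⊤)
    {e : A} (he : e ∈ Bc) (he0 : e ≠ 0) :
    ∀ᶠ M in atTop, ∃ u ∈ sandwichSpan (B M) e, ‖1 - u‖ < 1 := by
  have hmono : Monotone fun M => sandwichSpan (B M : Set A) e :=
    fun M M' h => sandwichSpan_mono (hB h)
  set K := ⨆ M, sandwichSpan (B M : Set A) e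
  have hmemK {w : A} : w ∈ K ↔ ∃ M, w ∈ sandwichSpan (B M) e :=
    AddSubgroup.mem_iSup_of_directed hmono.directed_le
  have hcommon {z w : A} (hz : z ∈ ⋃ N, (B N : Set A)) (hw : w ∈ K) :
      ∃ M, z ∈ B M ∧ w ∈ sandwichSpan (B M) e := by
    obtain ⟨M₁, hz⟩ := Set.mem_iUnion.1 hz
    obtain ⟨M₂, hw⟩ := hmemK.1 hw
    exact ⟨max M₁ M₂, hB (le_max_left _ _) hz, hmono (le_max_right _ _) hw⟩
  have hmul (M : ℕ) : ∀ x ∈ (B M : Set A), ∀ y ∈ (B M : Set A), x * y ∈ (B M : Set A) :=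
    fun _ hx _ hy => mul_mem hx hy
  have hclosure {f : A → A → A} (hf : Continuous (Function.uncurry f))
      (hfK : ∀ z ∈ ⋃ N, (B N : Set A), ∀ w ∈ K, f z w ∈ K) :
      ∀ z ∈ Bc, ∀ w ∈ K.topologicalClosure, f z w ∈ K.topologicalClosure := by
    intro z hz w hw
    rw [← SetLike.mem_coe, AddSubgroup.topologicalClosure_coe] at hw ⊢
    exact map_mem_closure₂ hf (hBc ▸ hz) hw hfK
  have h1 : (1 : A) ∈ K.topologicalClosure :=
    one_mem_of_isClosed_twoSidedIdeal_eq_bot_or_top hBc_simple _ K.isClosed_topologicalClosure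
      (hclosure continuous_mul fun z hz w hw => by
        obtain ⟨M, hz, hw⟩ := hcommon hz hw
        exact hmemK.2 ⟨M, mul_mem_sandwichSpan_left (hmul M) hz hw⟩)
      (hclosure (f := fun z w => w * z) (continuous_mul.comp continuous_swap) fun z hz w hw => by
        obtain ⟨M, hz, hw⟩ := hcommon hz hw
        exact hmemK.2 ⟨M, mul_mem_sandwichSpan_right (hmul M) hz hw⟩)
      he (K.le_topologicalClosure (hmemK.2 ⟨0, mem_sandwichSpan_self (one_mem _)⟩)) he0
  rw [← SetLike.mem_coe, AddSubgroup.topologicalClosure_coe] at h1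
  obtain ⟨u, huK, hu⟩ := Metric.mem_closure_iff.1 h1 1 one_pos
  obtain ⟨M, hM⟩ := hmemK.1 huK
  filter_upwards [eventually_ge_atTop M] with M' hM'
  exact ⟨u, hmono hM' hM, by rwa [dist_eq_norm] at hu⟩

section sumConj

variable {A ι : Type*} [Ring A] [Fintype ι]

theorem Commute.conj_of_mul_eq_one {M : Type*} [Monoid M] {s t x y : M} (hts : t * s = 1)
    (h : Commute x y) : Commute (s * x * t) (s * y * t) := by
  have hconj (z w : M) : s * z * t * (s * w * t) = s * (z * w) * t := by
    simp only [mul_assoc]; rw [← mul_assoc t, hts, one_mul]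
  rw [Commute, SemiconjBy, hconj, hconj, h.eq]

theorem commute_sum_mul_mul {u v : ι → A} (huv : ∑ i, u i * v i = 1) {T b : A}
    (h : ∀ i k, Commute T (v i * b * u k)) : Commute (∑ i, u i * T * v i) b := by
  calc (∑ i, u i * T * v i) * b = (∑ i, u i * T * v i * b) * ∑ k, u k * v k := by
        rw [huv, mul_one, Finset.sum_mul]
    _ = (∑ i, u i * v i * b) * ∑ k, u k * T * v k := by
        simp only [Finset.sum_mul_sum]
        refine Finset.sum_congr rfl fun i _ => Finset.sum_congr rfl fun k _ => ?_
        have := congrArg (fun x => u i * x * v k) (h i k).eq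
        simp only [mul_assoc] at this ⊢
        exact this
    _ = b * ∑ k, u k * T * v k := by rw [← Finset.sum_mul, huv, one_mul]

theorem sum_mul_mul_eq_of_commute {u v : ι → A} (huv : ∑ i, u i * v i = 1) {q : A}
    (h : ∀ i, Commute q (v i)) : ∑ i, u i * q * v i = q := by
  calc ∑ i, u i * q * v i = ∑ i, u i * v i * q :=
        Finset.sum_congr rfl fun i _ => by rw [mul_assoc, (h i).eq, mul_assoc]
    _ = q := by rw [← Finset.sum_mul, huv, one_mul]

variable [StarRing A] {S : Type*} [SetLike S A] [StarMemClass S A]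
  {a : ι → A} {s p : A}

def sumConj (a : ι → A) (s x : A) : A :=
  ∑ i, a i * (s * x * star s) * star (a i)

theorem star_mul_mul_eq_of_mul_mul_eq (hs : star s * s = 1) (hp : p = s * star s) {x c : A}
    (h : p * x * p = s * c * star s) : star s * x * s = c := by
  have hsp : star s * p = star s := by rw [hp, ← mul_assoc, hs, one_mul]
  have hps : p * s = s := by rw [hp, mul_assoc, hs, mul_one]
  calc star s * x * s = star s * p * x * (p * s) := by rw [hsp, hps]
    _ = star s * (s * c * star s) * s := by rw [← h]; simp only [mul_assoc]
    _ = c := by simp only [← mul_assoc, hs, one_mul]; rw [mul_assoc, hs, mul_one]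

theorem commute_sumConj [SubringClass S A] (hs : star s * s = 1) (hp : p = s * star s)
    (hasum : ∑ i, a i * p * star (a i) = 1) (hap : ∀ i, a i * p = a i) {X : S} {Y : Set A}
    (ha : ∀ i, a i ∈ X) (hXY : ∀ c ∈ X, ∃ d ∈ Y, p * c * p = s * d * star s)
    {q : A} (hq : ∀ d ∈ Y, Commute q d) {b : A} (hb : b ∈ X) : Commute (sumConj a s q) b := by
  have hsum : ∑ i, a i * star (a i) = 1 := by simpa only [hap] using hasum
  have hpa (i : ι) : p * star (a i) = star (a i) := by
    have hpstar : star p = p := by rw [hp, star_mul, star_star]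
    rw [← hpstar, ← star_mul, hap]
  refine commute_sum_mul_mul hsum fun i k => ?_
  obtain ⟨d, hd, hpcp⟩ := hXY _ (mul_mem (mul_mem (star_mem (ha i)) hb) (ha k))
  have hcompress : star (a i) * b * a k = s * d * star s := by
    calc star (a i) * b * a k = p * star (a i) * b * (a k * p) := by rw [hpa, hap]
      _ = s * d * star s := by rw [← hpcp]; simp only [mul_assoc]
  rw [hcompress]
  exact (hq d hd).conj_of_mul_eq_one hs

theorem star_mul_sumConj_mul (hs : star s * s = 1) (hp : p = s * star s)
    (hasum : ∑ i, a i * p * star (a i) = 1) {Y : S} (he : ∀ i, star s * a i * s ∈ Y)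
    {q : A} (hq : ∀ d ∈ Y, Commute q d) : star s * sumConj a s q * s = q := by
  have hconj (x : A) (i : ι) : star s * (a i * (s * x * star s) * star (a i)) * s
      = star s * a i * s * x * star (star s * a i * s) := by
    simp only [star_mul, star_star, mul_assoc]
  have hsum : ∑ i, star s * a i * s * star (star s * a i * s) = 1 := by
    calc ∑ i, star s * a i * s * star (star s * a i * s)
        = ∑ i, star s * (a i * (s * 1 * star s) * star (a i)) * s :=
          Finset.sum_congr rfl fun i _ => by rw [hconj, mul_one]
      _ = star s * (∑ i, a i * p * star (a i)) * s := by
        rw [Finset.mul_sum, Finset.sum_mul, hp, mul_one]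
      _ = 1 := by rw [hasum, mul_one, hs]
  rw [sumConj, Finset.mul_sum, Finset.sum_mul]
  simp only [hconj]
  exact sum_mul_mul_eq_of_commute hsum fun i => hq _ (star_mem (he i))

theorem iterate_sumConj_ne_zero_and_commute [SubringClass S A] (hs : star s * s = 1)
    (hp : p = s * star s) (hasum : ∑ i, a i * p * star (a i) = 1) (hap : ∀ i, a i * p = a i)
    {B : ℕ → S} (hB : Monotone fun N => (B N : Set A)) (ha : ∀ i, a i ∈ B 1)
    (hpB : ∀ N, ∀ c ∈ B N, ∃ d ∈ B (N + 1), p * c * p = s * d * star s) {M : ℕ} (hM : 1 ≤ M)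
    (l : ℕ) {q : A} (hq0 : q ≠ 0) (hq : ∀ b ∈ B (M + l), Commute q b) :
    (sumConj a s)^[l] q ≠ 0 ∧ ∀ b ∈ B M, Commute ((sumConj a s)^[l] q) b := by
  induction l generalizing q with
  | zero => exact ⟨hq0, hq⟩
  | succ l ih =>
    have he (i : ι) : star s * a i * s ∈ B (M + l + 1) := by
      obtain ⟨d, hd, h⟩ := hpB 1 (a i) (ha i)
      exact hB (show 2 ≤ M + l + 1 by omega) (star_mul_mul_eq_of_mul_mul_eq hs hp h ▸ hd)
    refine ih (fun h0 => hq0 ?_) (fun b hb => ?_)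
    · rw [← star_mul_sumConj_mul hs hp hasum he hq, h0, mul_zero, zero_mul]
    · exact commute_sumConj hs hp hasum hap (fun i => hB (show 1 ≤ M + l by omega) (ha i))
        (hpB _) hq hb

end sumConj

theorem exists_N1_central_compression_nonzero_general
    {A : Type*} [NormedRing A] [StarRing A] [NormedAlgebra ℂ A] [StarModule ℂ A]
    -- the increasing sequence of finite-dimensional unital C*-subalgebras
    (B : ℕ → StarSubalgebra ℂ A)
    (hBmono : ∀ N : ℕ, B N ≤ B (N + 1))
    -- Bc is the norm closure of the union of the B_N, assumed simple
    (Bc : StarSubalgebra ℂ A)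
    (hBc : (Bc : Set A) = closure (⋃ N : ℕ, (B N : Set A)))
    (hBsimple : ∀ I : TwoSidedIdeal Bc, IsClosed (I : Set Bc) → I = ⊥ ∨ I = ⊤)
    -- the isometry s and the projection p = ss*
    (s : A) (hs : star s * s = 1)
    (p : A) (hp : p = s * star s)
    (hpBNp : ∀ N : ℕ, ∀ b ∈ B N, ∃ c ∈ B (N + 1), p * b * p = s * c * star s)
    -- the elements a_1, ..., a_r of B_1 and the map σ
    {r : ℕ} (a : Fin r → A) (haB1 : ∀ i, a i ∈ B 1)
    (hasum : ∑ i, a i * p * star (a i) = 1)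
    (hap : ∀ i, a i * p = a i)
    (σ : A → A)
    (hσ : ∀ x : A, σ x = ∑ i, a i * (s * x * star s) * star (a i))
    -- the minimal central projections of B N, summing to 1
    (N : ℕ) (hN : 1 ≤ N) (J : ℕ) (P : Fin J → A)
    (hPmem : ∀ j, P j ∈ B N)
    (hPproj : ∀ j, IsSelfAdjoint (P j) ∧ P j * P j = P j ∧ P j ≠ 0)
    :
    ∃ N₁ : ℕ, N ≤ N₁ ∧
      ∀ l : ℕ, ∀ q : A, IsSelfAdjoint q → q * q = q → q ≠ 0 →
        (∀ b ∈ B (N₁ + l), q * b = b * q) →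
        ∀ j, P j * σ^[l] q * P j ≠ 0 := by
  obtain rfl : σ = sumConj a s := funext hσ
  have hB : Monotone fun N => (B N : Set A) := monotone_nat_of_le_succ fun N => hBmono N
  have hP_approx (j : Fin J) : ∀ᶠ M in atTop, ∃ u ∈ sandwichSpan (B M) (P j), ‖1 - u‖ < 1 :=
    eventually_exists_mem_sandwichSpan_norm_one_sub_lt_one hB hBc hBsimple
      (show P j ∈ (Bc : Set A) from hBc ▸ subset_closure (Set.mem_iUnion_of_mem N (hPmem j)))
      (hPproj j).2.2
  obtain ⟨N₁, happrox, hNN₁⟩ := ((eventually_all.2 hP_approx).and (eventually_ge_atTop N)).exists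
  refine ⟨N₁, hNN₁, fun l q _ _ hq0 hq j hPqP => ?_⟩
  obtain ⟨u, hu, hu1⟩ := happrox j
  obtain ⟨hσq0, hσq⟩ :=
    iterate_sumConj_ne_zero_and_commute hs hp hasum hap hB haB1 hpBNp (hN.trans hNN₁) l hq0 hq
  have hσqP : (sumConj a s)^[l] q * P j = 0 := by
    calc (sumConj a s)^[l] q * P j = (sumConj a s)^[l] q * P j * P j := by
          rw [mul_assoc, (hPproj j).2.1]
      _ = 0 := by rw [(hσq _ (hB hNN₁ (hPmem j))).eq, hPqP]
  exact hσq0 (eq_zero_of_mul_eq_zero_of_norm_one_sub_lt_one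
    (mul_eq_zero_of_mem_sandwichSpan hσq hσqP hu) hu1)

/-- Under the crossed-product setup `A ≅ B ⋊_ρ ℕ`: given `N ≥ 1` and the
minimal central projections `P 1, …, P J` of `B N` (which sum to `1`), there
is an integer `N₁ ≥ N` such that for every `l ≥ 0`, every nonzero projection
`q ∈ A ∩ B_{N₁+l}′` and every `j`, one has `P j * σ^l(q) * P j ≠ 0`. -/
theorem exists_N1_central_compression_nonzero
    {A : Type*} [NormedRing A] [StarRing A] [CStarRing A] [CompleteSpace A]
    [NormedAlgebra ℂ A] [StarModule ℂ A] [PartialOrder A] [StarOrderedRing A]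
    -- the increasing sequence of finite-dimensional unital C*-subalgebras
    (B : ℕ → StarSubalgebra ℂ A)
    (hBmono : ∀ N : ℕ, B N ≤ B (N + 1))
    (hBfd : ∀ N : ℕ, FiniteDimensional ℂ (B N))
    -- Bc is the norm closure of the union of the B_N, assumed simple
    (Bc : StarSubalgebra ℂ A)
    (hBc : (Bc : Set A) = closure (⋃ N : ℕ, (B N : Set A)))
    (hBsimple : ∀ I : TwoSidedIdeal Bc, IsClosed (I : Set Bc) → I = ⊥ ∨ I = ⊤)
    -- the isometry s and the projection p = ss*
    (s : A) (hs : star s * s = 1)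
    (p : A) (hp : p = s * star s) (hpne : p ≠ 1) (hpB1 : p ∈ B 1)
    (hsBN : ∀ N : ℕ, ∀ b ∈ B N, s * b * star s ∈ B (N + 1))
    (hpBNp : ∀ N : ℕ, ∀ b ∈ B N, ∃ c ∈ B (N + 1), p * b * p = s * c * star s)
    (hsBc : ∀ b ∈ Bc, ∃ c ∈ Bc, s * b * star s = p * c * p)
    (hpBcp : ∀ b ∈ Bc, ∃ c ∈ Bc, p * b * p = s * c * star s)
    -- A is generated as a C*-algebra by Bc together with s
    (hgen : (StarAlgebra.adjoin ℂ ((Bc : Set A) ∪ {s})).topologicalClosure = ⊤)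
    -- A is simple and purely infinite
    (hAsimple : ∀ I : TwoSidedIdeal A, IsClosed (I : Set A) → I = ⊥ ∨ I = ⊤)
    (hApi : ∀ a : A, 0 ≤ a → a ≠ 0 → ∃ x : A, x * a * star x = 1)
    -- the elements a_1, ..., a_r of B_1 and the map σ
    {r : ℕ} (a : Fin r → A) (haB1 : ∀ i, a i ∈ B 1)
    (hasum : ∑ i, a i * p * star (a i) = 1)
    (hap : ∀ i, a i * p = a i)
    (σ : A → A)
    (hσ : ∀ x : A, σ x = ∑ i, a i * (s * x * star s) * star (a i))
    -- the minimal central projections of B N, summing to 1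
    (N : ℕ) (hN : 1 ≤ N) (J : ℕ) (P : Fin J → A)
    (hPmem : ∀ j, P j ∈ B N)
    (hPproj : ∀ j, IsSelfAdjoint (P j) ∧ P j * P j = P j ∧ P j ≠ 0)
    (hPcentral : ∀ j, ∀ b ∈ B N, P j * b = b * P j)
    (hPmin : ∀ j, ∀ z ∈ B N, IsSelfAdjoint z → z * z = z →
      (∀ b ∈ B N, z * b = b * z) → z * P j = z → z = 0 ∨ z = P j)
    (hPsum : ∑ j, P j = 1)
    :
    ∃ N₁ : ℕ, N ≤ N₁ ∧
      ∀ l : ℕ, ∀ q : A, IsSelfAdjoint q → q * q = q → q ≠ 0 →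
        (∀ b ∈ B (N₁ + l), q * b = b * q) →
        ∀ j, P j * σ^[l] q * P j ≠ 0 :=
  exists_N1_central_compression_nonzero_general B hBmono Bc hBc hBsimple s hs p hp hpBNp a haB1
    hasum hap σ hσ N hN J P hPmem hPproj
end

section
/- Let α be an approximately inner automorphism of a unital purely infinite simple C*-algebra A, and let (p_j)_{j∈ℕ} be a uniformly central sequence of projections in A. Then for every ε > 0 and every finite-dimensional unital C*-subalgebra F of A there exist j ∈ ℕ and a partial isometry w ∈ A such that w*w = p_j, ‖ww* − α(p_j)‖ < ε, and ‖wx − xw‖ ≤ ε‖x‖ for all x ∈ F. -/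
/-!
Take unitaries `v` and `u` approximately implementing `α⁻¹` and `α` on a basis of `F` (and `u`
also at `p`); then `u v` almost commutes with that basis. Choosing `p = p_j` to almost commute
with `v` and with the basis, `w = u v p` has `w* w = p`, `w w* = u (v p v*) u* ≈ u p u* ≈ α p`,
and almost commutes with the basis. As `F` is finite-dimensional, the bounds on a basis give
`‖w x - x w‖ ≤ ε ‖x‖`.
-/

open Filter

theorem FiniteDimensional.exists_finset_forall_norm_apply_le_mul_norm
    {𝕜 E G : Type*} [NontriviallyNormedField 𝕜] [CompleteSpace 𝕜]
    [NormedAddCommGroup E] [NormedSpace 𝕜 E] [FiniteDimensional 𝕜 E]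
    [NormedAddCommGroup G] [NormedSpace 𝕜 G] :
    ∃ s : Finset E, ∀ ε > 0, ∃ δ > 0, ∀ T : E →ₗ[𝕜] G,
      (∀ y ∈ s, ‖T y‖ < δ) → ∀ x, ‖T x‖ ≤ ε * ‖x‖ := by
  classical
  let b := Module.finBasis 𝕜 E
  obtain ⟨C, hC, hb⟩ := b.exists_opNorm_le (F := G)
  refine ⟨Finset.univ.image b, fun ε hε => ⟨ε / C, by positivity, fun T hT x => ?_⟩⟩
  have hTb : ∀ i, ‖LinearMap.toContinuousLinearMap T (b i)‖ ≤ ε / C := fun i =>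
    (hT _ (Finset.mem_image_of_mem _ (Finset.mem_univ i))).le
  calc ‖T x‖ = ‖LinearMap.toContinuousLinearMap T x‖ := rfl
    _ ≤ ‖LinearMap.toContinuousLinearMap T‖ * ‖x‖ := ContinuousLinearMap.le_opNorm _ _
    _ ≤ C * (ε / C) * ‖x‖ := by gcongr; exact hb (by positivity) hTb
    _ = ε * ‖x‖ := by field_simp

theorem star_mul_self_unitary_mul {A : Type*} [Monoid A] [StarMul A] {U p : A}
    (hU : U ∈ unitary A) (hp : IsStarProjection p) :
    star (U * p) * (U * p) = p := by
  rw [star_mul, hp.isSelfAdjoint.star_eq, mul_assoc, ← mul_assoc (star U),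
    Unitary.star_mul_self_of_mem hU, one_mul, hp.isIdempotentElem.eq]

section CStarRing

variable {A : Type*} [NormedRing A] [StarRing A] [CStarRing A]

theorem norm_conj_unitary {u : A} (hu : u ∈ unitary A) (a : A) : ‖u * a * star u‖ = ‖a‖ := by
  rw [CStarRing.norm_mul_mem_unitary _ (Unitary.star_mem hu), CStarRing.norm_mem_unitary_mul a hu]

theorem norm_mul_sub_mul_eq_norm_sub_conj {u : A} (hu : u ∈ unitary A) (a b : A) :
    ‖a * u - u * b‖ = ‖a - u * b * star u‖ := by
  have h : (a - u * b * star u) * u = a * u - u * b := by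
    rw [sub_mul, mul_assoc _ (star u), Unitary.star_mul_self_of_mem hu, mul_one]
  rw [← h, CStarRing.norm_mul_mem_unitary _ hu]

theorem norm_self_mul_star_unitary_mul_sub_lt {u v p q : A} (hu : u ∈ unitary A)
    (hv : v ∈ unitary A) (hp : IsStarProjection p) {δ₁ δ₂ : ℝ}
    (hpv : ‖p * v - v * p‖ < δ₁) (hq : ‖q - u * p * star u‖ < δ₂) :
    ‖u * v * p * star (u * v * p) - q‖ < δ₁ + δ₂ := by
  have hw : u * v * p * star (u * v * p) - q
      = u * (v * p * star v - p) * star u - (q - u * p * star u) := by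
    have hpp : u * v * p * (p * (star v * star u)) = u * (v * (p * p) * star v) * star u := by
      noncomm_ring
    simp only [star_mul, hp.isSelfAdjoint.star_eq]
    rw [hpp, hp.isIdempotentElem.eq]
    noncomm_ring
  have hvp : ‖v * p * star v - p‖ = ‖p * v - v * p‖ := by
    rw [norm_sub_rev, ← norm_mul_sub_mul_eq_norm_sub_conj hv]
  calc ‖u * v * p * star (u * v * p) - q‖
      ≤ ‖u * (v * p * star v - p) * star u‖ + ‖q - u * p * star u‖ := hw ▸ norm_sub_le _ _
    _ < δ₁ + δ₂ := by rw [norm_conj_unitary hu, hvp]; gcongr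

theorem norm_unitary_mul_unitary_mul_commutator_lt {u v p y z : A} (hu : u ∈ unitary A)
    (hv : v ∈ unitary A) (hp : ‖p‖ ≤ 1) {δ₁ δ₂ δ₃ : ℝ} (hpy : ‖p * y - y * p‖ < δ₁)
    (hvy : ‖z - v * y * star v‖ < δ₂) (huz : ‖y - u * z * star u‖ < δ₃) :
    ‖u * v * p * y - y * (u * v * p)‖ < δ₁ + δ₂ + δ₃ := by
  have hsplit : u * v * p * y - y * (u * v * p)
      = u * (v * (p * y - y * p)) - u * ((z * v - v * y) * p) - (y * u - u * z) * (v * p) := by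
    noncomm_ring
  have h₁ : ‖u * (v * (p * y - y * p))‖ < δ₁ := by
    rwa [CStarRing.norm_mem_unitary_mul _ hu, CStarRing.norm_mem_unitary_mul _ hv]
  have h₂ : ‖u * ((z * v - v * y) * p)‖ < δ₂ := by
    rw [CStarRing.norm_mem_unitary_mul _ hu]
    calc ‖(z * v - v * y) * p‖ ≤ ‖z * v - v * y‖ * ‖p‖ := norm_mul_le _ _
      _ ≤ ‖z * v - v * y‖ := mul_le_of_le_one_right (norm_nonneg _) hp
      _ < δ₂ := by rwa [norm_mul_sub_mul_eq_norm_sub_conj hv]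
  have h₃ : ‖(y * u - u * z) * (v * p)‖ < δ₃ := by
    calc ‖(y * u - u * z) * (v * p)‖ ≤ ‖y * u - u * z‖ * ‖v * p‖ := norm_mul_le _ _
      _ ≤ ‖y * u - u * z‖ := by
        rw [CStarRing.norm_mem_unitary_mul _ hv]
        exact mul_le_of_le_one_right (norm_nonneg _) hp
      _ < δ₃ := by rwa [norm_mul_sub_mul_eq_norm_sub_conj hu]
  calc ‖u * v * p * y - y * (u * v * p)‖
      ≤ ‖u * (v * (p * y - y * p))‖ + ‖u * ((z * v - v * y) * p)‖
        + ‖(y * u - u * z) * (v * p)‖ :=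
          hsplit ▸ (norm_sub_le _ _).trans (add_le_add_left (norm_sub_le _ _) _)
    _ < δ₁ + δ₂ + δ₃ := by gcongr

def IsApproximatelyInner {R : Type*} [CommSemiring R] [Algebra R A] (α : A ≃ₐ[R] A) : Prop :=
  ∀ (F : Finset A) (ε : ℝ), 0 < ε → ∃ u ∈ unitary A, ∀ x ∈ F, ‖α x - u * x * star u‖ < ε

theorem IsApproximatelyInner.symm {R : Type*} [CommSemiring R] [Algebra R A] {α : A ≃ₐ[R] A}
    (hα : IsApproximatelyInner α) : IsApproximatelyInner α.symm := by
  classical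
  intro F ε hε
  obtain ⟨u, hu, hF⟩ := hα (F.image α.symm) ε hε
  refine ⟨star u, Unitary.star_mem hu, fun x hx => ?_⟩
  have hx' := hF _ (Finset.mem_image_of_mem _ hx)
  rw [AlgEquiv.apply_symm_apply, ← norm_neg, neg_sub,
    ← norm_conj_unitary (Unitary.star_mem hu)] at hx'
  have hconj : star u * (u * α.symm x * star u - x) * star (star u)
      = α.symm x - star u * x * star (star u) := by
    rw [star_star, mul_sub, sub_mul, ← mul_assoc, ← mul_assoc, Unitary.star_mul_self_of_mem hu,
      one_mul, mul_assoc, Unitary.star_mul_self_of_mem hu, mul_one]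
  rwa [hconj] at hx'

end CStarRing

theorem exists_partial_isometry_almost_central_general
    {A : Type*} [NormedRing A] [StarRing A] [CStarRing A]
    [NormedAlgebra ℂ A] [StarModule ℂ A]
    -- α is an approximately inner automorphism of A
    (α : A ≃ₐ[ℂ] A)
    (hαai : ∀ (F : Finset A) (ε : ℝ), 0 < ε →
      ∃ u ∈ unitary A, ∀ x ∈ F, ‖α x - u * x * star u‖ < ε)
    -- (p_j) is a uniformly central sequence of projections in A
    (P : ℕ → A)
    (hPproj : ∀ j, IsSelfAdjoint (P j) ∧ P j * P j = P j)
    (hPcentral : ∀ x : A,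
      Filter.Tendsto (fun j => ‖P j * x - x * P j‖) Filter.atTop (nhds 0))
    :
    ∀ ε : ℝ, 0 < ε → ∀ F : StarSubalgebra ℂ A, FiniteDimensional ℂ F →
      ∃ (j : ℕ) (w : A),
        star w * w = P j ∧
        ‖w * star w - α (P j)‖ < ε ∧
        ∀ x ∈ F, ‖w * x - x * w‖ ≤ ε * ‖x‖ := by
  classical
  intro ε hε F _
  have hα : IsApproximatelyInner α := hαai
  obtain ⟨s, hs⟩ :=
    FiniteDimensional.exists_finset_forall_norm_apply_le_mul_norm (𝕜 := ℂ) (E := F) (G := A)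
  obtain ⟨δ, hδ, hsmall⟩ := hs ε hε
  set η := min δ ε / 3 with hη
  have hη0 : 0 < η := by positivity
  let Y : Finset A := s.image (↑)
  obtain ⟨v, hv, hvY⟩ := hα.symm Y η hη0
  obtain ⟨j, hjY, hjv⟩ : ∃ j, (∀ y ∈ Y, ‖P j * y - y * P j‖ < η) ∧ ‖P j * v - v * P j‖ < η :=
    (((eventually_all_finset Y).2 fun y _ => (hPcentral y).eventually_lt_const hη0).and
      ((hPcentral v).eventually_lt_const hη0)).exists
  have hp : IsStarProjection (P j) := ⟨(hPproj j).2, (hPproj j).1⟩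
  obtain ⟨u, hu, huY⟩ := hα (insert (P j) (Y.image α.symm)) η hη0
  refine ⟨j, u * v * P j, star_mul_self_unitary_mul (mul_mem hu hv) hp, ?_, fun x hx => ?_⟩
  · calc _ < η + η := norm_self_mul_star_unitary_mul_sub_lt hu hv hp hjv
          (huY _ (Finset.mem_insert_self _ _))
      _ < ε := by linarith [min_le_right δ ε]
  · refine hsmall ((LinearMap.mulLeft ℂ (u * v * P j) - LinearMap.mulRight ℂ (u * v * P j)).comp
      (F.subtype : F →ₐ[ℂ] A).toLinearMap) (fun y hy => ?_) ⟨x, hx⟩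
    have hyY : (y : A) ∈ Y := Finset.mem_image_of_mem _ hy
    have huy := huY _ (Finset.mem_insert_of_mem (Finset.mem_image_of_mem _ hyY))
    rw [AlgEquiv.apply_symm_apply] at huy
    calc _ < η + η + η := norm_unitary_mul_unitary_mul_commutator_lt hu hv hp.norm_le
          (hjY _ hyY) (hvY _ hyY) huy
      _ ≤ δ := by linarith [min_le_left δ ε]

/-- Let `α` be an approximately inner automorphism of a unital purely infinite
simple C*-algebra `A` (of dimension at least two), and let `(p_j)` be a
uniformly central sequence of projections in `A`. Then for every `ε > 0` and
every finite-dimensional unital C*-subalgebra `F` of `A` there exist `j ∈ ℕ`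
and a partial isometry `w ∈ A` with `w* w = p_j`, `‖w w* - α (p_j)‖ < ε`, and
`‖w x - x w‖ ≤ ε ‖x‖` for all `x ∈ F`. -/
theorem exists_partial_isometry_almost_central
    {A : Type*} [NormedRing A] [StarRing A] [CStarRing A] [CompleteSpace A]
    [NormedAlgebra ℂ A] [StarModule ℂ A] [PartialOrder A] [StarOrderedRing A]
    -- A has dimension at least two
    (hdim : 2 ≤ Module.rank ℂ A)
    -- A is simple
    (hAsimple : ∀ I : TwoSidedIdeal A, IsClosed (I : Set A) → I = ⊥ ∨ I = ⊤)
    -- A is purely infinite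
    (hApi : ∀ a : A, 0 ≤ a → a ≠ 0 → ∃ x : A, x * a * star x = 1)
    -- α is an approximately inner automorphism of A
    (α : A ≃ₐ[ℂ] A) (hαstar : ∀ x : A, α (star x) = star (α x))
    (hαai : ∀ (F : Finset A) (ε : ℝ), 0 < ε →
      ∃ u ∈ unitary A, ∀ x ∈ F, ‖α x - u * x * star u‖ < ε)
    -- (p_j) is a uniformly central sequence of projections in A
    (P : ℕ → A)
    (hPproj : ∀ j, IsSelfAdjoint (P j) ∧ P j * P j = P j)
    (hPcentral : ∀ x : A,
      Filter.Tendsto (fun j => ‖P j * x - x * P j‖) Filter.atTop (nhds 0))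
    :
    ∀ ε : ℝ, 0 < ε → ∀ F : StarSubalgebra ℂ A, FiniteDimensional ℂ F →
      ∃ (j : ℕ) (w : A),
        star w * w = P j ∧
        ‖w * star w - α (P j)‖ < ε ∧
        ∀ x ∈ F, ‖w * x - x * w‖ ≤ ε * ‖x‖ :=
  exists_partial_isometry_almost_central_general α hαai P hPproj hPcentral
end

section
/- Let A be a unital simple C*-algebra, ρ̂ a continuous action of the circle group 𝕋 on A, B its fixed-point algebra, and s ∈ A an isometry with ss* ≠ 1 and ρ̂_λ(s) = λ s for every λ ∈ 𝕋. Assume that every element c ∈ B with c*c = 1 or cc* = 1 is a unitary (B has no proper isometry and no proper coisometry). Let β be an automorphism of A commuting with ρ̂_λ for every λ ∈ 𝕋. If β is inner, say β = Ad v for a unitary v ∈ A, then v ∈ B. Consequently β maps B onto B, and if the restriction of β to B is not of the form Ad w for any unitary w ∈ B, then β is an outer automorphism of A. -/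
/-!
If `β = Ad v` commutes with the action, then `Ad (ρ μ v) = Ad v`, so `v⋆ ρ_μ(v)` is central and
hence, `A` being simple, a scalar `χ μ`. The eigenvalues `χ` form a continuous character of the
circle, so `χ μ = μ ^ n`: `v` is homogeneous of some degree `n`. For `n = -m ≤ 0` the element
`v sᵐ` is an isometry of degree `0`, i.e. in the fixed-point algebra, so it is unitary; then
`sᵐ s⋆ᵐ = 1`, which for a proper isometry `s` forces `m = 0`. For `n ≥ 0` argue with `v⋆` instead.
-/

section Isometry

variable {R : Type*} [Monoid R] [StarMul R]

theorem star_mul_mul_eq_one {a b : R} (ha : star a * a = 1) (hb : star b * b = 1) :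
    star (a * b) * (a * b) = 1 := by
  rw [star_mul, mul_assoc, ← mul_assoc (star a), ha, one_mul, hb]

theorem star_pow_mul_pow_eq_one {s : R} (hs : star s * s = 1) (m : ℕ) :
    star (s ^ m) * s ^ m = 1 := by
  induction m with
  | zero => simp
  | succ m ih => rw [pow_succ]; exact star_mul_mul_eq_one ih hs

theorem eq_zero_of_pow_mul_star_pow_eq_one {s : R} (hs : star s * s = 1) (hss : s * star s ≠ 1)
    {m : ℕ} (h : s ^ m * star (s ^ m) = 1) : m = 0 := by
  obtain _ | k := m
  · rfl
  · have hright : s * (s ^ k * star (s ^ (k + 1))) = 1 := by rw [← mul_assoc, ← pow_succ', h]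
    exact absurd (left_inv_eq_right_inv hs hright ▸ hright) hss

theorem eq_one_of_conj_eq_one {u x : R} (hu : u ∈ unitary R) (h : u * x * star u = 1) :
    x = 1 := by
  have hu' := Unitary.star_mul_self_of_mem hu
  calc x = star u * u * x * (star u * u) := by rw [hu', one_mul, mul_one]
    _ = star u * (u * x * star u) * u := by simp only [mul_assoc]
    _ = 1 := by rw [h, mul_one, hu']

end Isometry

section SimpleBanachAlgebra

theorem eq_zero_of_mem_center_of_not_isUnit {A : Type*} [NormedRing A] [CompleteSpace A]
    (hA : ∀ I : TwoSidedIdeal A, IsClosed (I : Set A) → I = ⊥ ∨ I = ⊤)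
    {y : A} (hy : y ∈ Set.center A) (hyu : ¬IsUnit y) : y = 0 := by
  rw [Semigroup.mem_center_iff] at hy
  set I : Ideal A := (Ideal.span {y}).closure
  have hI : I.IsTwoSided := ⟨fun b ha ↦
    map_mem_closure (f := (· * b)) (continuous_mul_const b) ha fun x hx ↦ by
      obtain ⟨a, rfl⟩ := Ideal.mem_span_singleton'.mp hx
      exact Ideal.mem_span_singleton'.mpr ⟨a * b, by rw [mul_assoc, hy b, ← mul_assoc]⟩⟩
  have hspan : Ideal.span {y} ≠ ⊤ := fun htop ↦ by
    obtain ⟨a, ha⟩ := Ideal.mem_span_singleton'.mp ((Ideal.eq_top_iff_one _).mp htop)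
    exact hyu ⟨⟨y, a, by rw [← hy, ha], ha⟩, rfl⟩
  rcases hA I.toTwoSided (by rw [Ideal.coe_toTwoSided]; exact isClosed_closure) with hbot | htop
  · have hyI : y ∈ I.toTwoSided :=
      Ideal.mem_toTwoSided.mpr (subset_closure (Ideal.subset_span rfl))
    simpa [hbot] using hyI
  · exact absurd (by simpa using congrArg TwoSidedIdeal.asIdeal htop)
      ((Ideal.span {y}).closure_ne_top hspan)

variable {A : Type*} [NormedRing A] [NormedAlgebra ℂ A] [CompleteSpace A] [Nontrivial A]

theorem exists_eq_algebraMap_of_mem_center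
    (hA : ∀ I : TwoSidedIdeal A, IsClosed (I : Set A) → I = ⊥ ∨ I = ⊤)
    {z : A} (hz : z ∈ Set.center A) : ∃ c : ℂ, z = algebraMap ℂ A c := by
  obtain ⟨c, hc⟩ := spectrum.nonempty z
  refine ⟨c, (sub_eq_zero.mp (eq_zero_of_mem_center_of_not_isUnit hA ?_ hc)).symm⟩
  exact (Subring.center A).sub_mem (Set.algebraMap_mem_center c) hz

theorem exists_eq_smul_of_forall_conj_eq [StarRing A]
    (hA : ∀ I : TwoSidedIdeal A, IsClosed (I : Set A) → I = ⊥ ∨ I = ⊤)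
    {u v : A} (hu : u ∈ unitary A) (hv : v ∈ unitary A)
    (h : ∀ x, u * x * star u = v * x * star v) : ∃ c : ℂ, u = c • v := by
  have hcenter : star v * u ∈ Set.center A := Semigroup.mem_center_iff.mpr fun x ↦
    calc x * (star v * u) = star v * (v * x * star v) * u := by
          simp only [← mul_assoc, Unitary.star_mul_self_of_mem hv, one_mul]
      _ = star v * u * x * (star u * u) := by rw [← h]; simp only [mul_assoc]
      _ = star v * u * x := by rw [Unitary.star_mul_self_of_mem hu, mul_one]
  obtain ⟨c, hc⟩ := exists_eq_algebraMap_of_mem_center hA hcenter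
  refine ⟨c, ?_⟩
  calc u = v * (star v * u) := by rw [← mul_assoc, Unitary.mul_star_self_of_mem hv, one_mul]
    _ = c • v := by rw [hc, ← Algebra.commutes, Algebra.smul_def]

end SimpleBanachAlgebra

namespace AddCircle

open MeasureTheory

theorem fourier_apply_add {T : ℝ} (n : ℤ) (x y : AddCircle T) :
    fourier n (x + y) = fourier n x * fourier n y := by
  simp only [fourier_apply, smul_add, toCircle_add, Circle.coe_mul]

variable {T : ℝ} [Fact (0 < T)]

theorem exists_fourierCoeff_ne_zero_of_norm_eq_one {f : AddCircle T → ℂ} (hf : Continuous f)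
    (hnorm : ∀ x, ‖f x‖ = 1) : ∃ n : ℤ, fourierCoeff f n ≠ 0 := by
  by_contra! hzero
  let F := ContinuousMap.toLp (E := ℂ) 2 haarAddCircle ℂ ⟨f, hf⟩
  have hparseval := tsum_sq_fourierCoeff F
  have hcoeff : ∀ n, fourierCoeff F n = 0 := fun n ↦ by
    rw [fourierCoeff_toLp]; exact hzero n
  have hint : ∫ t, ‖F t‖ ^ 2 ∂haarAddCircle = 1 := by
    calc ∫ t, ‖F t‖ ^ 2 ∂haarAddCircle = ∫ _t, (1 : ℝ) ∂haarAddCircle :=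
          integral_congr_ae <| (ContinuousMap.coeFn_toLp (p := 2) (𝕜 := ℂ) haarAddCircle
            ⟨f, hf⟩).mono fun t ht ↦ by simp only [F, ht]; simp [hnorm]
      _ = 1 := by simp
  simp [hcoeff, hint] at hparseval

theorem eq_fourier_of_fourierCoeff_ne_zero {f : AddCircle T → ℂ}
    (hadd : ∀ x y, f (x + y) = f x * f y) {n : ℤ} (hn : fourierCoeff f n ≠ 0) (u : AddCircle T) :
    f u = fourier n u := by
  -- Compute `∫ fourier (-n) t * f (t + u)` in two ways, the second by translation invariance.
  have htranslate := integral_add_right_eq_self (μ := haarAddCircle)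
    (fun t ↦ fourier (-n) (t - u) * f t) u
  simp only [add_sub_cancel_right] at htranslate
  have hleft : ∫ t, fourier (-n) t * f (t + u) ∂haarAddCircle = f u * fourierCoeff f n := by
    simp_rw [fourierCoeff, smul_eq_mul, ← integral_const_mul, hadd]
    congr 1; ext t; ring
  have hright :
      ∫ t, fourier (-n) (t - u) * f t ∂haarAddCircle = fourier n u * fourierCoeff f n := by
    simp_rw [fourierCoeff, smul_eq_mul, ← integral_const_mul, sub_eq_add_neg, fourier_apply_add]
    congr 1; ext t
    rw [fourier_apply (x := -u), smul_neg, neg_smul, neg_neg, ← fourier_apply]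
    ring
  rw [hleft, hright] at htranslate
  exact mul_right_cancel₀ hn htranslate

end AddCircle

theorem exists_eq_zpow_of_continuousOn_circle {χ : ℂ → ℂ}
    (hcont : ContinuousOn χ {μ | ‖μ‖ = 1})
    (hmul : ∀ μ ν : ℂ, ‖μ‖ = 1 → ‖ν‖ = 1 → χ (μ * ν) = χ μ * χ ν)
    (hnorm : ∀ μ : ℂ, ‖μ‖ = 1 → ‖χ μ‖ = 1) :
    ∃ n : ℤ, ∀ μ : ℂ, ‖μ‖ = 1 → χ μ = μ ^ n := by
  have : Fact ((0 : ℝ) < 1) := ⟨one_pos⟩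
  let f : AddCircle (1 : ℝ) → ℂ := fun x ↦ χ (AddCircle.toCircle x)
  have hf : Continuous f := hcont.comp_continuous (by fun_prop) fun x ↦ Circle.norm_coe _
  obtain ⟨n, hn⟩ := AddCircle.exists_fourierCoeff_ne_zero_of_norm_eq_one hf
    fun x ↦ hnorm _ (Circle.norm_coe _)
  have hfourier := AddCircle.eq_fourier_of_fourierCoeff_ne_zero (fun x y ↦ by
    simp only [f, AddCircle.toCircle_add, Circle.coe_mul]
    exact hmul _ _ (Circle.norm_coe _) (Circle.norm_coe _)) hn
  refine ⟨n, fun μ hμ ↦ ?_⟩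
  obtain ⟨x, hx⟩ := (AddCircle.homeomorphCircle one_ne_zero).surjective
    ⟨μ, mem_sphere_zero_iff_norm.mpr hμ⟩
  rw [AddCircle.homeomorphCircle_apply] at hx
  have hμn := hfourier x
  simp only [f, hx, fourier_apply, AddCircle.toCircle_zsmul] at hμn
  exact hμn

/-- `x` lies in the `n`-th spectral subspace of the circle action `ρ`. -/
def IsHomogeneous {A : Type*} [Semiring A] [Algebra ℂ A] (ρ : ℂ → A ≃ₐ[ℂ] A) (n : ℤ) (x : A) :
    Prop :=
  ∀ μ : ℂ, ‖μ‖ = 1 → ρ μ x = μ ^ n • x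

section Homogeneous

variable {A : Type*} [Semiring A] [Algebra ℂ A] {ρ : ℂ → A ≃ₐ[ℂ] A}

theorem isHomogeneous_zero_iff {x : A} :
    IsHomogeneous ρ 0 x ↔ ∀ μ : ℂ, ‖μ‖ = 1 → ρ μ x = x := by
  simp [IsHomogeneous]

theorem IsHomogeneous.mul {n m : ℤ} {x y : A} (hx : IsHomogeneous ρ n x)
    (hy : IsHomogeneous ρ m y) : IsHomogeneous ρ (n + m) (x * y) := fun μ hμ ↦ by
  have hμ0 : μ ≠ 0 := by rintro rfl; simp at hμ
  rw [map_mul, hx μ hμ, hy μ hμ, smul_mul_smul_comm, zpow_add₀ hμ0]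

theorem IsHomogeneous.pow {n : ℤ} {x : A} (hx : IsHomogeneous ρ n x) (k : ℕ) :
    IsHomogeneous ρ (k * n) (x ^ k) := by
  induction k with
  | zero => intro μ hμ; simp
  | succ k ih => simpa [pow_succ, add_mul] using ih.mul hx

theorem IsHomogeneous.star [StarRing A] [StarModule ℂ A]
    (hρstar : ∀ μ : ℂ, ‖μ‖ = 1 → ∀ x : A, ρ μ (star x) = star (ρ μ x))
    {n : ℤ} {x : A} (hx : IsHomogeneous ρ n x) : IsHomogeneous ρ (-n) (star x) := fun μ hμ ↦ by
  rw [hρstar μ hμ, hx μ hμ, star_smul, star_zpow₀, Complex.star_def,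
    ← Complex.inv_eq_conj hμ, inv_zpow']

end Homogeneous

section CStarAlgebra

variable {A : Type*} [NormedRing A] [StarRing A] [CStarRing A] [NormedAlgebra ℂ A]
  [Nontrivial A] {ρ : ℂ → A ≃ₐ[ℂ] A}

theorem exists_isHomogeneous_of_forall_eq_smul
    (hρstar : ∀ μ : ℂ, ‖μ‖ = 1 → ∀ x : A, ρ μ (star x) = star (ρ μ x))
    (hρmul : ∀ μ ν : ℂ, ‖μ‖ = 1 → ‖ν‖ = 1 → ∀ x : A, ρ (μ * ν) x = ρ μ (ρ ν x))
    (hρcont : ∀ x : A, ContinuousOn (fun μ : ℂ => ρ μ x) {μ : ℂ | ‖μ‖ = 1})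
    {v : A} (hv : v ∈ unitary A) {χ : ℂ → ℂ} (hχ : ∀ μ : ℂ, ‖μ‖ = 1 → ρ μ v = χ μ • v) :
    ∃ n : ℤ, IsHomogeneous ρ n v := by
  have halg : ∀ μ : ℂ, ‖μ‖ = 1 → algebraMap ℂ A (χ μ) = ρ μ v * star v := fun μ hμ ↦ by
    rw [hχ μ hμ, smul_mul_assoc, Unitary.mul_star_self_of_mem hv, Algebra.algebraMap_eq_smul_one]
  have hcont : ContinuousOn χ {μ | ‖μ‖ = 1} :=
    (algebraMap_isometry ℂ A).isEmbedding.continuousOn_iff.mpr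
      (((hρcont v).mul continuousOn_const).congr fun μ hμ ↦ halg μ hμ)
  have hmul : ∀ μ ν : ℂ, ‖μ‖ = 1 → ‖ν‖ = 1 → χ (μ * ν) = χ μ * χ ν := fun μ ν hμ hν ↦
    (algebraMap ℂ A).injective <| by
      rw [halg _ (by rw [norm_mul, hμ, hν, one_mul]), hρmul μ ν hμ hν, hχ ν hν, map_smul,
        smul_mul_assoc, ← halg μ hμ, Algebra.smul_def, ← map_mul, mul_comm]
  have hnorm : ∀ μ : ℂ, ‖μ‖ = 1 → ‖χ μ‖ = 1 := fun μ hμ ↦ by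
    rw [← norm_algebraMap' A, halg μ hμ]
    exact CStarRing.norm_of_mem_unitary <|
      mul_mem (Unitary.map_mem (StarAlgEquiv.ofAlgEquiv (ρ μ) (hρstar μ hμ)) hv)
        (Unitary.star_mem hv)
  exact (exists_eq_zpow_of_continuousOn_circle hcont hmul hnorm).imp fun n hn μ hμ ↦ by
    rw [hχ μ hμ, hn μ hμ]

theorem exists_isHomogeneous_of_forall_conj_eq [CompleteSpace A]
    (hA : ∀ I : TwoSidedIdeal A, IsClosed (I : Set A) → I = ⊥ ∨ I = ⊤)
    (hρstar : ∀ μ : ℂ, ‖μ‖ = 1 → ∀ x : A, ρ μ (star x) = star (ρ μ x))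
    (hρmul : ∀ μ ν : ℂ, ‖μ‖ = 1 → ‖ν‖ = 1 → ∀ x : A, ρ (μ * ν) x = ρ μ (ρ ν x))
    (hρcont : ∀ x : A, ContinuousOn (fun μ : ℂ => ρ μ x) {μ : ℂ | ‖μ‖ = 1})
    {v : A} (hv : v ∈ unitary A)
    (hinv : ∀ μ : ℂ, ‖μ‖ = 1 → ∀ x : A, ρ μ v * x * star (ρ μ v) = v * x * star v) :
    ∃ n : ℤ, IsHomogeneous ρ n v := by
  choose! χ hχ using fun μ hμ ↦ exists_eq_smul_of_forall_conj_eq hA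
    (Unitary.map_mem (StarAlgEquiv.ofAlgEquiv (ρ μ) (hρstar μ hμ)) hv) hv (hinv μ hμ)
  exact exists_isHomogeneous_of_forall_eq_smul hρstar hρmul hρcont hv hχ

end CStarAlgebra

section ProperIsometry

variable {A : Type*} [Ring A] [StarRing A] [Algebra ℂ A] {ρ : ℂ → A ≃ₐ[ℂ] A} {s : A}

theorem eq_zero_of_isHomogeneous_neg_natCast (hs : star s * s = 1) (hss : s * star s ≠ 1)
    (hs1 : IsHomogeneous ρ 1 s)
    (hiso : ∀ c : A, IsHomogeneous ρ 0 c → star c * c = 1 → c * star c = 1)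
    {u : A} (hu : u ∈ unitary A) {m : ℕ} (hum : IsHomogeneous ρ (-m) u) : m = 0 := by
  have hc0 : IsHomogeneous ρ 0 (u * s ^ m) := by simpa using hum.mul (hs1.pow m)
  have hcc := star_mul_mul_eq_one (Unitary.star_mul_self_of_mem hu) (star_pow_mul_pow_eq_one hs m)
  have hco : u * (s ^ m * star (s ^ m)) * star u = 1 := by
    simpa only [star_mul, mul_assoc] using hiso _ hc0 hcc
  exact eq_zero_of_pow_mul_star_pow_eq_one hs hss (eq_one_of_conj_eq_one hu hco)

theorem isHomogeneous_zero_of_mem_unitary [StarModule ℂ A]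
    (hρstar : ∀ μ : ℂ, ‖μ‖ = 1 → ∀ x : A, ρ μ (star x) = star (ρ μ x))
    (hs : star s * s = 1) (hss : s * star s ≠ 1) (hs1 : IsHomogeneous ρ 1 s)
    (hiso : ∀ c : A, IsHomogeneous ρ 0 c → star c * c = 1 → c * star c = 1)
    {n : ℤ} {v : A} (hvn : IsHomogeneous ρ n v) (hv : v ∈ unitary A) :
    IsHomogeneous ρ 0 v := by
  obtain ⟨m, rfl | rfl⟩ := Int.eq_nat_or_neg n
  · have hm := eq_zero_of_isHomogeneous_neg_natCast hs hss hs1 hiso (Unitary.star_mem hv)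
      (hvn.star hρstar)
    simpa [hm] using hvn
  · simpa [eq_zero_of_isHomogeneous_neg_natCast hs hss hs1 hiso hv hvn] using hvn

end ProperIsometry

theorem inner_implementing_unitary_mem_fixedPointAlgebra_general
    {A : Type*} [NormedRing A] [StarRing A] [CStarRing A] [CompleteSpace A]
    [NormedAlgebra ℂ A] [StarModule ℂ A]
    -- A is simple
    (hAsimple : ∀ I : TwoSidedIdeal A, IsClosed (I : Set A) → I = ⊥ ∨ I = ⊤)
    -- ρ is a continuous action of the circle group 𝕋 on A by *-automorphisms
    (ρ : ℂ → A ≃ₐ[ℂ] A)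
    (hρstar : ∀ μ : ℂ, ‖μ‖ = 1 → ∀ x : A, ρ μ (star x) = star (ρ μ x))
    (hρmul : ∀ μ ν : ℂ, ‖μ‖ = 1 → ‖ν‖ = 1 → ∀ x : A, ρ (μ * ν) x = ρ μ (ρ ν x))
    (hρcont : ∀ x : A, ContinuousOn (fun μ : ℂ => ρ μ x) {μ : ℂ | ‖μ‖ = 1})
    -- Bf is the fixed-point algebra of the action
    (Bf : Set A) (hBf : Bf = {b : A | ∀ μ : ℂ, ‖μ‖ = 1 → ρ μ b = b})
    -- s is an isometry with s s* ≠ 1 on which the action is by scalars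
    (s : A) (hs : star s * s = 1) (hss : s * star s ≠ 1)
    (hρs : ∀ μ : ℂ, ‖μ‖ = 1 → ρ μ s = μ • s)
    -- Bf has no proper isometry and no proper coisometry
    (hBiso : ∀ c ∈ Bf, (star c * c = 1 ∨ c * star c = 1) →
      star c * c = 1 ∧ c * star c = 1)
    -- β is an automorphism of A commuting with the action
    (β : A ≃ₐ[ℂ] A)
    (hβcomm : ∀ μ : ℂ, ‖μ‖ = 1 → ∀ x : A, β (ρ μ x) = ρ μ (β x))
    :
    (∀ v ∈ unitary A, (∀ x : A, β x = v * x * star v) → v ∈ Bf) ∧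
    (⇑β '' Bf = Bf) ∧
    ((¬ ∃ w : A, w ∈ Bf ∧ w ∈ unitary A ∧ ∀ b ∈ Bf, β b = w * b * star w) →
      ¬ ∃ v ∈ unitary A, ∀ x : A, β x = v * x * star v) := by
  have : Nontrivial A := ⟨⟨_, _, hss⟩⟩
  have hiso (c : A) (hc : IsHomogeneous ρ 0 c) (hcc : star c * c = 1) : c * star c = 1 :=
    (hBiso c (hBf ▸ isHomogeneous_zero_iff.mp hc) (Or.inl hcc)).2
  have hmem : ∀ v ∈ unitary A, (∀ x : A, β x = v * x * star v) → v ∈ Bf := fun v hv hβv ↦ by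
    have hinv (μ : ℂ) (hμ : ‖μ‖ = 1) (x : A) : ρ μ v * x * star (ρ μ v) = v * x * star v := by
      obtain ⟨y, rfl⟩ := (ρ μ).surjective x
      simpa only [hβv, map_mul, hρstar μ hμ] using (hβcomm μ hμ y).symm
    obtain ⟨n, hn⟩ := exists_isHomogeneous_of_forall_conj_eq hAsimple hρstar hρmul hρcont hv hinv
    have hs1 : IsHomogeneous ρ 1 s := by simpa [IsHomogeneous] using hρs
    exact hBf ▸ isHomogeneous_zero_iff.mp
      (isHomogeneous_zero_of_mem_unitary hρstar hs hss hs1 hiso hn hv)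
  have himage : ⇑β '' Bf = Bf := by
    subst hBf
    refine Set.Subset.antisymm ?_ fun b hb ↦
      ⟨β.symm b, fun μ hμ ↦ β.injective ?_, β.apply_symm_apply b⟩
    · rintro _ ⟨x, hx, rfl⟩ μ hμ
      rw [← hβcomm μ hμ x, hx μ hμ]
    · rw [hβcomm μ hμ, β.apply_symm_apply, hb μ hμ]
  refine ⟨hmem, himage, fun hno ⟨v, hv, hβv⟩ ↦ hno ⟨v, hmem v hv hβv, hv, fun b _ ↦ hβv b⟩⟩

/-- Let `A` be a unital simple C*-algebra, `ρ` a continuous action of the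
circle group on `A` with fixed-point algebra `Bf`, and `s ∈ A` an isometry
with `s s* ≠ 1` and `ρ μ s = μ s` for every `μ` of modulus one. Assume every
`c ∈ Bf` with `c* c = 1` or `c c* = 1` is a unitary. Let `β` be an
automorphism of `A` commuting with the action. If `β = Ad v` is inner then
`v ∈ Bf`; consequently `β` maps `Bf` onto `Bf`, and if the restriction of `β`
to `Bf` is not implemented by a unitary of `Bf`, then `β` is outer. -/
theorem inner_implementing_unitary_mem_fixedPointAlgebra
    {A : Type*} [NormedRing A] [StarRing A] [CStarRing A] [CompleteSpace A]
    [NormedAlgebra ℂ A] [StarModule ℂ A]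
    -- A is simple
    (hAsimple : ∀ I : TwoSidedIdeal A, IsClosed (I : Set A) → I = ⊥ ∨ I = ⊤)
    -- ρ is a continuous action of the circle group 𝕋 on A by *-automorphisms
    (ρ : ℂ → A ≃ₐ[ℂ] A)
    (hρstar : ∀ μ : ℂ, ‖μ‖ = 1 → ∀ x : A, ρ μ (star x) = star (ρ μ x))
    (hρmul : ∀ μ ν : ℂ, ‖μ‖ = 1 → ‖ν‖ = 1 → ∀ x : A, ρ (μ * ν) x = ρ μ (ρ ν x))
    (hρone : ∀ x : A, ρ 1 x = x)
    (hρcont : ∀ x : A, ContinuousOn (fun μ : ℂ => ρ μ x) {μ : ℂ | ‖μ‖ = 1})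
    -- Bf is the fixed-point algebra of the action
    (Bf : Set A) (hBf : Bf = {b : A | ∀ μ : ℂ, ‖μ‖ = 1 → ρ μ b = b})
    -- s is an isometry with s s* ≠ 1 on which the action is by scalars
    (s : A) (hs : star s * s = 1) (hss : s * star s ≠ 1)
    (hρs : ∀ μ : ℂ, ‖μ‖ = 1 → ρ μ s = μ • s)
    -- Bf has no proper isometry and no proper coisometry
    (hBiso : ∀ c ∈ Bf, (star c * c = 1 ∨ c * star c = 1) →
      star c * c = 1 ∧ c * star c = 1)
    -- β is an automorphism of A commuting with the action
    (β : A ≃ₐ[ℂ] A) (hβstar : ∀ x : A, β (star x) = star (β x))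
    (hβcomm : ∀ μ : ℂ, ‖μ‖ = 1 → ∀ x : A, β (ρ μ x) = ρ μ (β x))
    :
    (∀ v ∈ unitary A, (∀ x : A, β x = v * x * star v) → v ∈ Bf) ∧
    (⇑β '' Bf = Bf) ∧
    ((¬ ∃ w : A, w ∈ Bf ∧ w ∈ unitary A ∧ ∀ b ∈ Bf, β b = w * b * star w) →
      ¬ ∃ v ∈ unitary A, ∀ x : A, β x = v * x * star v) :=
  inner_implementing_unitary_mem_fixedPointAlgebra_general hAsimple ρ hρstar hρmul hρcont Bf hBf s
    hs hss hρs hBiso β hβcomm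
end

section
/- Let A be a C*-algebra, N ≥ 1, and (E_{i,j})_{0≤i,j≤N−1} a system of matrix units in A. Let φ : A → A be a *-homomorphism satisfying φ(E_{i,j}) = E_{i+1,j+1} for all 0 ≤ i, j ≤ N−2. Then E_0 := N^{−1} Σ_{i,j=0}^{N−1} E_{i,j} is a projection in A and ‖φ(E_0) − E_0‖ ≤ 4/√N. -/
open Finset

/-! The sum `S = ∑ E i j` is self-adjoint with `S * S = N • S`, so `E₀ = S / N` is a projection.
The shift `φ` maps the upper-left `(N-1) × (N-1)` block of `S` onto its lower-right block, so
`φ S - S` is `φ` of the last row and column of `S` minus its first row and column. A column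
`T = ∑_{i ∈ s} E i k` satisfies `T⋆ T = #s • E k k`, hence `‖T‖ ≤ √#s` by the C⋆-identity, and
likewise for rows. Since `φ` is contractive, `‖φ S - S‖ ≤ 4 √N`. -/

structure IsMatrixUnits {A : Type*} [Mul A] [Star A] [Zero A] (N : ℕ) (E : ℕ → ℕ → A) :
    Prop where
  star_eq : ∀ i j, i < N → j < N → star (E i j) = E j i
  mul_eq : ∀ i j k l, i < N → j < N → k < N → l < N →
    E i j * E k l = if j = k then E i l else 0

def matrixUnitSum {A : Type*} [AddCommMonoid A] (N : ℕ) (E : ℕ → ℕ → A) : A :=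
  ∑ i ∈ range N, ∑ j ∈ range N, E i j

theorem Finset.sum_range_succ_sum_range_succ {M : Type*} [AddCommMonoid M] (n : ℕ)
    (f : ℕ → ℕ → M) :
    ∑ i ∈ range (n + 1), ∑ j ∈ range (n + 1), f i j =
      ∑ i ∈ range n, ∑ j ∈ range n, f i j +
        (∑ i ∈ range n, f i n + ∑ j ∈ range (n + 1), f n j) := by
  simp only [sum_range_succ _ n, sum_add_distrib]
  abel

theorem Finset.sum_range_succ'_sum_range_succ' {M : Type*} [AddCommMonoid M] (n : ℕ)
    (f : ℕ → ℕ → M) :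
    ∑ i ∈ range (n + 1), ∑ j ∈ range (n + 1), f i j =
      ∑ i ∈ range n, ∑ j ∈ range n, f (i + 1) (j + 1) +
        (∑ i ∈ range n, f (i + 1) 0 + ∑ j ∈ range (n + 1), f 0 j) := by
  rw [sum_range_succ' _ n]
  simp only [sum_range_succ' (f _) n, sum_add_distrib]
  abel

theorem map_matrixUnitSum_sub_matrixUnitSum {A F : Type*} [AddCommGroup A] [FunLike F A A]
    [AddMonoidHomClass F A A] {n : ℕ} {E : ℕ → ℕ → A} (φ : F)
    (hφ : ∀ i j, i + 1 < n + 1 → j + 1 < n + 1 → φ (E i j) = E (i + 1) (j + 1)) :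
    φ (matrixUnitSum (n + 1) E) - matrixUnitSum (n + 1) E =
      φ (∑ i ∈ range n, E i n + ∑ j ∈ range (n + 1), E n j) -
        (∑ i ∈ range n, E (i + 1) 0 + ∑ j ∈ range (n + 1), E 0 j) := by
  have hshift : φ (∑ i ∈ range n, ∑ j ∈ range n, E i j) =
      ∑ i ∈ range n, ∑ j ∈ range n, E (i + 1) (j + 1) := by
    simp only [map_sum]
    exact sum_congr rfl fun i hi => sum_congr rfl fun j hj =>
      hφ i j (by simpa using hi) (by simpa using hj)
  rw [matrixUnitSum]
  nth_rewrite 1 [sum_range_succ_sum_range_succ]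
  rw [sum_range_succ'_sum_range_succ', map_add, hshift]
  abel

namespace IsMatrixUnits

section Algebra

variable {A : Type*} [NonUnitalRing A] [StarRing A] {N : ℕ} {E : ℕ → ℕ → A}

theorem isStarProjection_diag (hE : IsMatrixUnits N E) {k : ℕ} (hk : k < N) :
    IsStarProjection (E k k) where
  isIdempotentElem := by rw [IsIdempotentElem, hE.mul_eq k k k k hk hk hk hk, if_pos rfl]
  isSelfAdjoint := hE.star_eq k k hk hk

theorem star_sum_mul_sum (hE : IsMatrixUnits N E) {s : Finset ℕ} (hs : s ⊆ range N)
    {k : ℕ} (hk : k < N) :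
    star (∑ i ∈ s, E i k) * ∑ i ∈ s, E i k = #s • E k k := by
  have hs : ∀ i ∈ s, i < N := fun i hi => mem_range.1 (hs hi)
  rw [star_sum, sum_mul, ← sum_const]
  refine sum_congr rfl fun i hi => ?_
  rw [hE.star_eq i k (hs i hi) hk, mul_sum, sum_eq_single_of_mem i hi,
    hE.mul_eq k i i k hk (hs i hi) (hs i hi) hk, if_pos rfl]
  intro j hj hji
  rw [hE.mul_eq k i j k hk (hs i hi) (hs j hj) hk, if_neg (Ne.symm hji)]

theorem mul_matrixUnitSum (hE : IsMatrixUnits N E) {i j : ℕ} (hi : i < N) (hj : j < N) :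
    E i j * matrixUnitSum N E = ∑ l ∈ range N, E i l := by
  rw [matrixUnitSum, mul_sum, sum_eq_single_of_mem j (mem_range.2 hj)]
  · rw [mul_sum]
    exact sum_congr rfl fun l hl => by rw [hE.mul_eq i j j l hi hj hj (mem_range.1 hl), if_pos rfl]
  · intro k hk hkj
    rw [mul_sum]
    exact sum_eq_zero fun l hl => by
      rw [hE.mul_eq i j k l hi hj (mem_range.1 hk) (mem_range.1 hl), if_neg (Ne.symm hkj)]

theorem matrixUnitSum_mul_self (hE : IsMatrixUnits N E) :
    matrixUnitSum N E * matrixUnitSum N E = N • matrixUnitSum N E := by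
  calc matrixUnitSum N E * matrixUnitSum N E
      = ∑ i ∈ range N, ∑ j ∈ range N, ∑ l ∈ range N, E i l := by
        rw [matrixUnitSum, sum_mul]
        refine sum_congr rfl fun i hi => ?_
        rw [sum_mul]
        exact sum_congr rfl fun j hj => hE.mul_matrixUnitSum (mem_range.1 hi) (mem_range.1 hj)
    _ = N • matrixUnitSum N E := by
        simp only [sum_const, card_range, matrixUnitSum, smul_sum]

theorem isSelfAdjoint_matrixUnitSum (hE : IsMatrixUnits N E) :
    IsSelfAdjoint (matrixUnitSum N E) := by
  rw [IsSelfAdjoint, matrixUnitSum, star_sum, sum_comm]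
  exact sum_congr rfl fun j hj => by
    rw [star_sum]
    exact sum_congr rfl fun i hi => hE.star_eq j i (mem_range.1 hj) (mem_range.1 hi)

theorem isStarProjection_inv_smul_matrixUnitSum {𝕜 : Type*} [Field 𝕜] [StarRing 𝕜]
    [Module 𝕜 A] [StarModule 𝕜 A] [IsScalarTower 𝕜 A A] [SMulCommClass 𝕜 A A]
    (hE : IsMatrixUnits N E) :
    IsStarProjection ((N : 𝕜)⁻¹ • matrixUnitSum N E) where
  isIdempotentElem := by
    rw [IsIdempotentElem, smul_mul_smul_comm, hE.matrixUnitSum_mul_self,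
      ← Nat.cast_smul_eq_nsmul 𝕜, smul_smul]
    congr 1
    simpa using mul_self_mul_inv (N : 𝕜)⁻¹
  isSelfAdjoint := by
    rw [IsSelfAdjoint, star_smul, star_inv₀, star_natCast, hE.isSelfAdjoint_matrixUnitSum.star_eq]

end Algebra

section Norm

variable {A : Type*} [NonUnitalNormedRing A] [StarRing A] [CStarRing A] {N : ℕ}
  {E : ℕ → ℕ → A}

theorem norm_sum_col_le (hE : IsMatrixUnits N E) {s : Finset ℕ} (hs : s ⊆ range N) {k : ℕ}
    (hk : k < N) : ‖∑ i ∈ s, E i k‖ ≤ √(#s : ℝ) := by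
  rw [Real.le_sqrt (norm_nonneg _) (Nat.cast_nonneg _), sq, ← CStarRing.norm_star_mul_self,
    hE.star_sum_mul_sum hs hk]
  calc ‖#s • E k k‖ ≤ #s * ‖E k k‖ := norm_nsmul_le
    _ ≤ #s := mul_le_of_le_one_right (Nat.cast_nonneg _) ((hE.isStarProjection_diag hk).norm_le)

theorem norm_sum_row_le (hE : IsMatrixUnits N E) {s : Finset ℕ} (hs : s ⊆ range N) {k : ℕ}
    (hk : k < N) : ‖∑ j ∈ s, E k j‖ ≤ √(#s : ℝ) := by
  have hrow : ∑ j ∈ s, E k j = star (∑ j ∈ s, E j k) := by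
    rw [star_sum]
    exact sum_congr rfl fun j hj => (hE.star_eq j k (mem_range.1 (hs hj)) hk).symm
  rw [hrow, norm_star]
  exact hE.norm_sum_col_le hs hk

theorem norm_map_matrixUnitSum_sub_le {F : Type*} [FunLike F A A] [AddMonoidHomClass F A A]
    (hE : IsMatrixUnits N E) (φ : F) (hφ_le : ∀ a, ‖φ a‖ ≤ ‖a‖)
    (hφ : ∀ i j, i + 1 < N → j + 1 < N → φ (E i j) = E (i + 1) (j + 1)) :
    ‖φ (matrixUnitSum N E) - matrixUnitSum N E‖ ≤ 4 * √N := by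
  obtain _ | n := N
  · simp [matrixUnitSum]
  have hsucc : ∑ i ∈ range n, E (i + 1) 0 = ∑ i ∈ (range n).map (addRightEmbedding 1), E i 0 := by
    rw [sum_map]; rfl
  have hsub : (range n).map (addRightEmbedding 1) ⊆ range (n + 1) := by
    intro i hi
    obtain ⟨j, hj, rfl⟩ := mem_map.1 hi
    simpa using hj
  have hcol : ∀ {s}, s ⊆ range (n + 1) → ∀ {k}, k < n + 1 → ‖∑ i ∈ s, E i k‖ ≤ √(n + 1 : ℕ) :=
    fun hs _ hk => (hE.norm_sum_col_le hs hk).trans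
      (Real.sqrt_le_sqrt (by exact_mod_cast (card_le_card hs).trans (card_range _).le))
  have hrow : ∀ {k}, k < n + 1 → ‖∑ j ∈ range (n + 1), E k j‖ ≤ √(n + 1 : ℕ) := fun hk => by
    simpa using hE.norm_sum_row_le subset_rfl hk
  calc ‖φ (matrixUnitSum (n + 1) E) - matrixUnitSum (n + 1) E‖
      ≤ ‖∑ i ∈ range n, E i n + ∑ j ∈ range (n + 1), E n j‖ +
          ‖∑ i ∈ range n, E (i + 1) 0 + ∑ j ∈ range (n + 1), E 0 j‖ := by
        rw [map_matrixUnitSum_sub_matrixUnitSum φ hφ]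
        exact (norm_sub_le _ _).trans (add_le_add_left (hφ_le _) _)
    _ ≤ ‖∑ i ∈ range n, E i n‖ + ‖∑ j ∈ range (n + 1), E n j‖ +
          (‖∑ i ∈ range n, E (i + 1) 0‖ + ‖∑ j ∈ range (n + 1), E 0 j‖) :=
        add_le_add (norm_add_le _ _) (norm_add_le _ _)
    _ ≤ 4 * √(n + 1 : ℕ) := by
        linarith [hcol (range_subset_range.2 n.le_succ) n.lt_succ_self, hrow n.lt_succ_self,
          hsucc ▸ hcol hsub n.succ_pos, hrow n.succ_pos]

end Norm

end IsMatrixUnits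

theorem averaged_matrix_units_almost_invariant_general
    {A : Type*} [NormedRing A] [StarRing A] [CStarRing A] [CompleteSpace A]
    [NormedAlgebra ℂ A] [StarModule ℂ A]
    (N : ℕ)
    -- (E i j) is a system of matrix units of size N
    (E : ℕ → ℕ → A)
    (hEstar : ∀ i j, i < N → j < N → star (E i j) = E j i)
    (hEmul : ∀ i j k l, i < N → j < N → k < N → l < N →
      E i j * E k l = if j = k then E i l else 0)
    -- φ is a *-homomorphism shifting the matrix units
    (φ : A →⋆ₙₐ[ℂ] A)
    (hφ : ∀ i j, i + 1 < N → j + 1 < N → φ (E i j) = E (i + 1) (j + 1))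
    :
    ∀ E₀ : A,
      E₀ = (N : ℂ)⁻¹ • ∑ i ∈ Finset.range N, ∑ j ∈ Finset.range N, E i j →
      IsSelfAdjoint E₀ ∧ E₀ * E₀ = E₀ ∧ ‖φ E₀ - E₀‖ ≤ 4 / Real.sqrt N := by
  rintro E₀ rfl
  let _ : CStarAlgebra A := ⟨⟩
  have hE : IsMatrixUnits N E := ⟨hEstar, hEmul⟩
  obtain ⟨hidem, hsa⟩ := hE.isStarProjection_inv_smul_matrixUnitSum (𝕜 := ℂ)
  refine ⟨hsa, hidem.eq, ?_⟩
  have hnorm := hE.norm_map_matrixUnitSum_sub_le φ (NonUnitalStarAlgHom.norm_apply_le φ) hφ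
  calc ‖φ ((N : ℂ)⁻¹ • matrixUnitSum N E) - (N : ℂ)⁻¹ • matrixUnitSum N E‖
      = (N : ℝ)⁻¹ * ‖φ (matrixUnitSum N E) - matrixUnitSum N E‖ := by
        rw [map_smul, ← smul_sub, norm_smul, norm_inv, Complex.norm_natCast]
    _ ≤ (N : ℝ)⁻¹ * (4 * √N) := by gcongr
    _ = 4 / √N := by rw [mul_left_comm, ← div_eq_inv_mul, Real.sqrt_div_self, div_eq_mul_inv]

/-- Let `(E i j)_{0 ≤ i,j ≤ N-1}` be a system of matrix units in a C*-algebra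
`A` and `φ : A → A` a *-homomorphism with `φ (E i j) = E (i+1) (j+1)` for
`0 ≤ i, j ≤ N-2`. Then `E₀ := N⁻¹ ∑_{i,j} E i j` is a projection and
`‖φ E₀ - E₀‖ ≤ 4 / √N`. -/
theorem averaged_matrix_units_almost_invariant
    {A : Type*} [NormedRing A] [StarRing A] [CStarRing A] [CompleteSpace A]
    [NormedAlgebra ℂ A] [StarModule ℂ A]
    (N : ℕ) (hN : 1 ≤ N)
    -- (E i j) is a system of matrix units of size N
    (E : ℕ → ℕ → A)
    (hEstar : ∀ i j, i < N → j < N → star (E i j) = E j i)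
    (hEmul : ∀ i j k l, i < N → j < N → k < N → l < N →
      E i j * E k l = if j = k then E i l else 0)
    -- φ is a *-homomorphism shifting the matrix units
    (φ : A →⋆ₙₐ[ℂ] A)
    (hφ : ∀ i j, i + 1 < N → j + 1 < N → φ (E i j) = E (i + 1) (j + 1))
    :
    ∀ E₀ : A,
      E₀ = (N : ℂ)⁻¹ • ∑ i ∈ Finset.range N, ∑ j ∈ Finset.range N, E i j →
      IsSelfAdjoint E₀ ∧ E₀ * E₀ = E₀ ∧ ‖φ E₀ - E₀‖ ≤ 4 / Real.sqrt N :=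
  averaged_matrix_units_almost_invariant_general N E hEstar hEmul φ hφ
end

section
/- Let A be a C*-algebra, m, M ≥ 1 integers, (f_{i,j})_{0≤i,j≤mM−1} a system of matrix units in A, and β : A → A a *-homomorphism satisfying β(f_{i,j}) = f_{i+1,j+1} for all 0 ≤ i, j ≤ mM−2. For 0 ≤ i ≤ M−1 define F_i = m^{−1} Σ_{k,l=0}^{m−1} f_{i+kM, i+lM}. Then F_0,…,F_{M−1} are mutually orthogonal projections in A, β(F_i) = F_{i+1} for 0 ≤ i ≤ M−2, and ‖β(F_{M−1}) − F_0‖ ≤ 4/√m. -/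
/-!
Write `P i = ∑_{p, q ∈ S i} f p q` for the tower `S i = {i + k M | k < m}`. The matrix unit
relations give `star (P i) = P i` and `P i * P j = δ i j • m • P i`, so the `F i = m⁻¹ • P i` are
mutually orthogonal projections, and `β` carries `S i` onto `S (i + 1)` for `i + 1 < M`.
For the last tower, `β` still carries `S (M - 1) \ {m M - 1}` onto `S 0 \ {0}`, so
`β (P (M - 1)) - P 0` is a difference of two crosses, each made of one row and one column of
matrix units. A column `x = ∑_{p ∈ S} f p j` has `star x * x = #S • f j j`, so by the
C⋆-identity `‖x‖ ≤ √#S`; each cross thus has norm at most `2 √m`.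
-/

open Finset

structure IsMatrixUnits_s13 {ι A : Type*} [DecidableEq ι] [Mul A] [Zero A] [Star A]
    (f : ι → ι → A) (s : Set ι) : Prop where
  star_eq : ∀ i ∈ s, ∀ j ∈ s, star (f i j) = f j i
  mul_eq : ∀ i ∈ s, ∀ j ∈ s, ∀ k ∈ s, ∀ l ∈ s, f i j * f k l = if j = k then f i l else 0

def blockSum {ι A : Type*} [AddCommMonoid A] (f : ι → ι → A) (S : Finset ι) : A :=
  ∑ p ∈ S, ∑ q ∈ S, f p q

section blockSum

variable {ι A : Type*} [DecidableEq ι] [AddCommMonoid A] {f : ι → ι → A}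

theorem blockSum_insert {c : ι} {T : Finset ι} (hc : c ∉ T) :
    blockSum f (insert c T) =
      blockSum f T + ∑ p ∈ insert c T, f p c + ∑ q ∈ T, f c q := by
  simp only [blockSum, sum_insert hc, sum_add_distrib]
  abel

theorem map_blockSum {B G : Type*} [AddCommMonoid B] [FunLike G A B] [AddMonoidHomClass G A B]
    (g : G) {S : Finset ι} {σ : ι → ι} {f' : ι → ι → B} (hσ : Set.InjOn σ S)
    (hg : ∀ p ∈ S, ∀ q ∈ S, g (f p q) = f' (σ p) (σ q)) :
    g (blockSum f S) = blockSum f' (S.image σ) := by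
  simp only [blockSum, map_sum, sum_image hσ]
  exact sum_congr rfl fun p hp => sum_congr rfl fun q hq => hg p hp q hq

end blockSum

namespace IsMatrixUnits_s13

variable {ι A : Type*} [DecidableEq ι] {f : ι → ι → A} {s : Set ι}

section Algebra

variable [NonUnitalRing A] [StarRing A]

theorem star_blockSum (hf : IsMatrixUnits_s13 f s) {S : Finset ι} (hS : ↑S ⊆ s) :
    star (blockSum f S) = blockSum f S := by
  simp only [blockSum, star_sum]
  rw [sum_comm]
  exact sum_congr rfl fun p hp => sum_congr rfl fun q hq => hf.star_eq q (hS hq) p (hS hp)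

theorem mul_blockSum (hf : IsMatrixUnits_s13 f s) {p q : ι} (hp : p ∈ s) (hq : q ∈ s)
    {T : Finset ι} (hT : ↑T ⊆ s) :
    f p q * blockSum f T = if q ∈ T then ∑ t ∈ T, f p t else 0 := by
  calc f p q * blockSum f T
      = ∑ r ∈ T, if q = r then ∑ t ∈ T, f p t else 0 := by
        simp only [blockSum, mul_sum]
        refine sum_congr rfl fun r hr => ?_
        split_ifs with hqr
        · exact sum_congr rfl fun t ht => by
            rw [hf.mul_eq p hp q hq r (hT hr) t (hT ht), if_pos hqr]
        · exact sum_eq_zero fun t ht => by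
            rw [hf.mul_eq p hp q hq r (hT hr) t (hT ht), if_neg hqr]
    _ = _ := sum_ite_eq T q _

theorem blockSum_mul_blockSum (hf : IsMatrixUnits_s13 f s) {S T : Finset ι} (hS : ↑S ⊆ s)
    (hT : ↑T ⊆ s) :
    blockSum f S * blockSum f T = #(S ∩ T) • ∑ p ∈ S, ∑ t ∈ T, f p t := by
  rw [smul_sum, blockSum, sum_mul]
  refine sum_congr rfl fun p hp => ?_
  calc (∑ q ∈ S, f p q) * blockSum f T
      = ∑ q ∈ S, if q ∈ T then ∑ t ∈ T, f p t else 0 := by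
        rw [sum_mul]
        exact sum_congr rfl fun q hq => hf.mul_blockSum (hS hp) (hS hq) hT
    _ = #(S ∩ T) • ∑ t ∈ T, f p t := by rw [sum_ite_mem, sum_const]

theorem isStarProjection_apply_self (hf : IsMatrixUnits_s13 f s) {j : ι} (hj : j ∈ s) :
    IsStarProjection (f j j) where
  isIdempotentElem := by simpa using! hf.mul_eq j hj j hj j hj j hj
  isSelfAdjoint := hf.star_eq j hj j hj

theorem star_sum_mul_sum_s13 (hf : IsMatrixUnits_s13 f s) {S : Finset ι} (hS : ↑S ⊆ s) {j : ι}
    (hj : j ∈ s) : star (∑ p ∈ S, f p j) * ∑ p ∈ S, f p j = #S • f j j := by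
  calc star (∑ p ∈ S, f p j) * ∑ p ∈ S, f p j
      = ∑ p ∈ S, ∑ q ∈ S, if p = q then f j j else 0 := by
        rw [star_sum, sum_mul_sum]
        refine sum_congr rfl fun p hp => sum_congr rfl fun q hq => ?_
        rw [hf.star_eq p (hS hp) j hj, hf.mul_eq j hj p (hS hp) q (hS hq) j hj]
    _ = #S • f j j := by simp only [sum_ite_eq, sum_ite_mem, inter_self, sum_const]

end Algebra

section Norm

variable [NonUnitalNormedRing A] [StarRing A] [CStarRing A]

theorem norm_sum_col_le_s13 (hf : IsMatrixUnits_s13 f s) {S : Finset ι} (hS : ↑S ⊆ s) {j : ι}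
    (hj : j ∈ s) : ‖∑ p ∈ S, f p j‖ ≤ √(#S) := by
  refine (Real.le_sqrt (norm_nonneg _) (Nat.cast_nonneg _)).mpr ?_
  calc ‖∑ p ∈ S, f p j‖ ^ 2 = ‖#S • f j j‖ := by
        rw [sq, ← CStarRing.norm_star_mul_self, hf.star_sum_mul_sum_s13 hS hj]
    _ ≤ #S * ‖f j j‖ := norm_nsmul_le
    _ ≤ #S := mul_le_of_le_one_right (Nat.cast_nonneg _) (hf.isStarProjection_apply_self hj).norm_le

theorem norm_sum_row_le_s13 (hf : IsMatrixUnits_s13 f s) {S : Finset ι} (hS : ↑S ⊆ s) {j : ι}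
    (hj : j ∈ s) : ‖∑ q ∈ S, f j q‖ ≤ √(#S) := by
  have : ∑ q ∈ S, f j q = star (∑ q ∈ S, f q j) := by
    rw [star_sum]
    exact sum_congr rfl fun q hq => (hf.star_eq q (hS hq) j hj).symm
  rw [this, norm_star]
  exact hf.norm_sum_col_le_s13 hS hj

theorem norm_blockSum_insert_sub_le (hf : IsMatrixUnits_s13 f s) {c : ι} {T : Finset ι}
    (hc : c ∉ T) (hcT : ↑(insert c T) ⊆ s) :
    ‖blockSum f (insert c T) - blockSum f T‖ ≤ 2 * √(#(insert c T)) := by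
  obtain ⟨hcs, hT⟩ : c ∈ s ∧ ↑T ⊆ s := by rwa [coe_insert, Set.insert_subset_iff] at hcT
  have hrow : ‖∑ q ∈ T, f c q‖ ≤ √(#(insert c T)) :=
    (hf.norm_sum_row_le_s13 hT hcs).trans
      (Real.sqrt_le_sqrt (by exact_mod_cast card_le_card (subset_insert c T)))
  rw [blockSum_insert hc, add_assoc, add_sub_cancel_left]
  linarith [norm_add_le (∑ p ∈ insert c T, f p c) (∑ q ∈ T, f c q), hf.norm_sum_col_le_s13 hcT hcs]

end Norm

end IsMatrixUnits_s13

theorem isStarProjection_inv_natCast_smul {𝕜 A : Type*} [Field 𝕜] [StarRing 𝕜] [NonUnitalRing A]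
    [StarRing A] [Module 𝕜 A] [StarModule 𝕜 A] [IsScalarTower 𝕜 A A] [SMulCommClass 𝕜 A A]
    {P : A} {n : ℕ} (hP : IsSelfAdjoint P) (hPP : P * P = n • P) :
    IsStarProjection ((n : 𝕜)⁻¹ • P) where
  isSelfAdjoint := IsSelfAdjoint.smul (by simp [IsSelfAdjoint]) hP
  isIdempotentElem := by
    rw [IsIdempotentElem, smul_mul_smul_comm, hPP, ← Nat.cast_smul_eq_nsmul 𝕜, smul_smul]
    congr 1
    exact (congrArg _ (inv_inv _).symm).trans (mul_self_mul_inv _)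

theorem norm_starAlgHom_apply_le {A : Type*} [NormedRing A] [StarRing A] [CStarRing A]
    [CompleteSpace A] [NormedAlgebra ℂ A] [StarModule ℂ A] (β : A →⋆ₙₐ[ℂ] A) (a : A) :
    ‖β a‖ ≤ ‖a‖ := by
  let _ : CStarAlgebra A := { ‹NormedRing A›, ‹StarRing A›, ‹CStarRing A›, ‹NormedAlgebra ℂ A›,
      ‹StarModule ℂ A›, ‹CompleteSpace A› with }
  exact NonUnitalStarAlgHom.norm_apply_le β a

def tower (m M i : ℕ) : Finset ℕ :=
  (range m).image fun k => i + k * M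

section tower

variable {m M i p : ℕ}

theorem injective_add_mul (i : ℕ) (hM : 0 < M) : Function.Injective fun k => i + k * M :=
  fun _ _ h => Nat.eq_of_mul_eq_mul_right hM (Nat.add_left_cancel h)

theorem card_tower (hM : 0 < M) : #(tower m M i) = m := by
  rw [tower, card_image_of_injective _ (injective_add_mul i hM), card_range]

theorem lt_of_mem_tower (hp : p ∈ tower m M i) (hi : i < M) : p < m * M := by
  obtain ⟨k, hk, rfl⟩ := mem_image.mp hp
  calc i + k * M < M + k * M := by omega
    _ = (k + 1) * M := by ring
    _ ≤ m * M := Nat.mul_le_mul_right M (mem_range.mp hk)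

theorem tower_subset_Iio (hi : i < M) : ↑(tower m M i) ⊆ Set.Iio (m * M) :=
  fun _ hp => lt_of_mem_tower hp hi

theorem disjoint_tower {j : ℕ} (hi : i < M) (hj : j < M) (hij : i ≠ j) :
    Disjoint (tower m M i) (tower m M j) := by
  simp only [tower, disjoint_left, mem_image, not_exists, not_and]
  rintro _ ⟨k, -, rfl⟩ l - h
  have := congrArg (· % M) h
  simp only [Nat.add_mul_mod_self_right, Nat.mod_eq_of_lt hi, Nat.mod_eq_of_lt hj] at this
  exact hij this.symm

theorem image_add_one_tower : (tower m M i).image (· + 1) = tower m M (i + 1) := by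
  rw [tower, image_image]
  exact image_congr fun k _ => by simp only [Function.comp_apply]; ring

theorem tower_add_one_eq_insert_last : tower (m + 1) M i = insert (i + m * M) (tower m M i) := by
  rw [tower, range_add_one, image_insert, tower]

theorem tower_add_one_eq_insert_first : tower (m + 1) M i = insert i (tower m M (i + M)) := by
  rw [tower, range_add_one', map_eq_image, image_insert, image_image, tower, zero_mul, add_zero]
  congr 1
  exact image_congr fun k _ => show i + (k + 1) * M = i + M + k * M by ring

theorem add_mul_notMem_tower (hM : 0 < M) : i + m * M ∉ tower m M i := by
  simp only [tower, mem_image, mem_range, not_exists, not_and]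
  intro k hk h
  exact hk.ne (injective_add_mul i hM h)

theorem notMem_tower_add (hM : 0 < M) : i ∉ tower m M (i + M) := by
  simp only [tower, mem_image, not_exists, not_and]
  intro k _ h
  omega

theorem blockSum_tower {A : Type*} [AddCommMonoid A] (f : ℕ → ℕ → A) (hM : 0 < M) :
    blockSum f (tower m M i) = ∑ k ∈ range m, ∑ l ∈ range m, f (i + k * M) (i + l * M) := by
  have hinj := (injective_add_mul i hM).injOn (s := ↑(range m))
  simp only [blockSum, tower, sum_image hinj]

theorem map_blockSum_tower {A G : Type*} [AddCommMonoid A] [FunLike G A A]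
    [AddMonoidHomClass G A A] {f : ℕ → ℕ → A} (β : G) {N : ℕ}
    (hβ : ∀ i j, i + 1 < N → j + 1 < N → β (f i j) = f (i + 1) (j + 1))
    (hN : ∀ p ∈ tower m M (i + 1), p < N) :
    β (blockSum f (tower m M i)) = blockSum f (tower m M (i + 1)) := by
  have hlt : ∀ p ∈ tower m M i, p + 1 < N := fun p hp =>
    hN _ (image_add_one_tower ▸ mem_image_of_mem (· + 1) hp)
  rw [← image_add_one_tower, map_blockSum β (add_left_injective 1).injOn]
  exact fun p hp q hq => hβ p q (hlt p hp) (hlt q hq)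

end tower

theorem norm_map_blockSum_tower_sub_le {A G : Type*} [NonUnitalNormedRing A] [StarRing A]
    [CStarRing A] [FunLike G A A] [AddMonoidHomClass G A A] {m M : ℕ} {f : ℕ → ℕ → A}
    (hf : IsMatrixUnits_s13 f (Set.Iio (m * M))) (hM : 0 < M) (β : G) (hβ_le : ∀ a, ‖β a‖ ≤ ‖a‖)
    (hβ : ∀ i j, i + 1 < m * M → j + 1 < m * M → β (f i j) = f (i + 1) (j + 1)) :
    ‖β (blockSum f (tower m M (M - 1))) - blockSum f (tower m M 0)‖ ≤ 4 * √m := by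
  rcases m with _ | m
  · simp [tower, blockSum]
  have hlast := tower_add_one_eq_insert_last (m := m) (M := M) (i := M - 1)
  have hfirst := tower_add_one_eq_insert_first (m := m) (M := M) (i := 0)
  rw [zero_add] at hfirst
  have hsub : ∀ {i}, i < M → ↑(tower (m + 1) M i) ⊆ Set.Iio ((m + 1) * M) := tower_subset_Iio
  have hshift : β (blockSum f (tower m M (M - 1))) = blockSum f (tower m M M) := by
    refine (map_blockSum_tower β hβ fun p hp => ?_).trans (by rw [Nat.sub_add_cancel hM])
    rw [Nat.sub_add_cancel hM] at hp
    exact hsub hM (hfirst ▸ mem_insert_of_mem hp)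
  have hcross : ∀ {i c T}, i < M → tower (m + 1) M i = insert c T → c ∉ T →
      ‖blockSum f (tower (m + 1) M i) - blockSum f T‖ ≤ 2 * √(m + 1 : ℕ) := by
    intro i c T hi hins hc
    have := hf.norm_blockSum_insert_sub_le hc (hins ▸ hsub hi)
    rwa [← hins, card_tower hM] at this
  calc ‖β (blockSum f (tower (m + 1) M (M - 1))) - blockSum f (tower (m + 1) M 0)‖
      = ‖β (blockSum f (tower (m + 1) M (M - 1)) - blockSum f (tower m M (M - 1))) -
          (blockSum f (tower (m + 1) M 0) - blockSum f (tower m M M))‖ := by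
        rw [map_sub, hshift, sub_sub_sub_cancel_right]
    _ ≤ ‖blockSum f (tower (m + 1) M (M - 1)) - blockSum f (tower m M (M - 1))‖ +
          ‖blockSum f (tower (m + 1) M 0) - blockSum f (tower m M M)‖ :=
        (norm_sub_le _ _).trans (by gcongr; exact hβ_le _)
    _ ≤ 2 * √(m + 1 : ℕ) + 2 * √(m + 1 : ℕ) :=
        add_le_add (hcross (by omega) hlast (add_mul_notMem_tower hM))
          (hcross hM hfirst (by simpa using notMem_tower_add (m := m) (i := 0) hM))
    _ = 4 * √(m + 1 : ℕ) := by ring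

theorem averaged_matrix_units_towers_general
    {A : Type*} [NormedRing A] [StarRing A] [CStarRing A] [CompleteSpace A]
    [NormedAlgebra ℂ A] [StarModule ℂ A]
    (m M : ℕ) (hM : 1 ≤ M)
    -- (f i j) is a system of matrix units of size m * M
    (f : ℕ → ℕ → A)
    (hfstar : ∀ i j, i < m * M → j < m * M → star (f i j) = f j i)
    (hfmul : ∀ i j k l, i < m * M → j < m * M → k < m * M → l < m * M →
      f i j * f k l = if j = k then f i l else 0)
    -- β is a *-homomorphism shifting the matrix units
    (β : A →⋆ₙₐ[ℂ] A)
    (hβ : ∀ i j, i + 1 < m * M → j + 1 < m * M →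
      β (f i j) = f (i + 1) (j + 1))
    :
    ∀ F : ℕ → A,
      (∀ i, i < M → F i = (m : ℂ)⁻¹ •
        ∑ k ∈ Finset.range m, ∑ l ∈ Finset.range m, f (i + k * M) (i + l * M)) →
      (∀ i, i < M → IsSelfAdjoint (F i) ∧ F i * F i = F i) ∧
      (∀ i j, i < M → j < M → i ≠ j → F i * F j = 0) ∧
      (∀ i, i + 1 < M → β (F i) = F (i + 1)) ∧
      ‖β (F (M - 1)) - F 0‖ ≤ 4 / Real.sqrt m := by
  intro F hF
  have hf : IsMatrixUnits_s13 f (Set.Iio (m * M)) :=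
    ⟨fun i hi j hj => hfstar i j hi hj, fun i hi j hj k hk l hl => hfmul i j k l hi hj hk hl⟩
  replace hF : ∀ i < M, F i = (m : ℂ)⁻¹ • blockSum f (tower m M i) := fun i hi => by
    rw [hF i hi, blockSum_tower f hM]
  have hproj : ∀ i < M, IsStarProjection (F i) := fun i hi => hF i hi ▸
    isStarProjection_inv_natCast_smul (hf.star_blockSum (tower_subset_Iio hi)) (by
      rw [hf.blockSum_mul_blockSum (tower_subset_Iio hi) (tower_subset_Iio hi), inter_self,
        card_tower hM, blockSum])
  refine ⟨fun i hi => ⟨(hproj i hi).isSelfAdjoint, (hproj i hi).isIdempotentElem⟩, ?_, ?_, ?_⟩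
  · intro i j hi hj hij
    rw [hF i hi, hF j hj, smul_mul_smul_comm,
      hf.blockSum_mul_blockSum (tower_subset_Iio hi) (tower_subset_Iio hj),
      disjoint_iff_inter_eq_empty.mp (disjoint_tower hi hj hij), card_empty, zero_smul, smul_zero]
  · intro i hi
    rw [hF i (by omega), hF (i + 1) hi, map_smul,
      map_blockSum_tower β hβ fun p hp => lt_of_mem_tower hp hi]
  · rw [hF (M - 1) (by omega), hF 0 hM, map_smul, ← smul_sub, norm_smul, norm_inv,
      Complex.norm_natCast]
    calc (m : ℝ)⁻¹ * ‖β (blockSum f (tower m M (M - 1))) - blockSum f (tower m M 0)‖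
        ≤ (m : ℝ)⁻¹ * (4 * √m) :=
          mul_le_mul_of_nonneg_left (norm_map_blockSum_tower_sub_le hf hM β
            (norm_starAlgHom_apply_le β) hβ) (by positivity)
      _ = 4 / √m := by rw [mul_left_comm, ← div_eq_inv_mul, Real.sqrt_div_self', mul_one_div]

/-- Let `(f i j)_{0 ≤ i,j ≤ mM-1}` be a system of matrix units in a C*-algebra
`A` and `β : A → A` a *-homomorphism with `β (f i j) = f (i+1) (j+1)` for
`0 ≤ i, j ≤ mM-2`. For `0 ≤ i ≤ M-1` set
`F i = m⁻¹ ∑_{k,l=0}^{m-1} f (i+kM) (i+lM)`. Then `F 0, …, F (M-1)` are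
mutually orthogonal projections, `β (F i) = F (i+1)` for `0 ≤ i ≤ M-2`, and
`‖β (F (M-1)) - F 0‖ ≤ 4 / √m`. -/
theorem averaged_matrix_units_towers
    {A : Type*} [NormedRing A] [StarRing A] [CStarRing A] [CompleteSpace A]
    [NormedAlgebra ℂ A] [StarModule ℂ A]
    (m M : ℕ) (hm : 1 ≤ m) (hM : 1 ≤ M)
    -- (f i j) is a system of matrix units of size m * M
    (f : ℕ → ℕ → A)
    (hfstar : ∀ i j, i < m * M → j < m * M → star (f i j) = f j i)
    (hfmul : ∀ i j k l, i < m * M → j < m * M → k < m * M → l < m * M →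
      f i j * f k l = if j = k then f i l else 0)
    -- β is a *-homomorphism shifting the matrix units
    (β : A →⋆ₙₐ[ℂ] A)
    (hβ : ∀ i j, i + 1 < m * M → j + 1 < m * M →
      β (f i j) = f (i + 1) (j + 1))
    :
    ∀ F : ℕ → A,
      (∀ i, i < M → F i = (m : ℂ)⁻¹ •
        ∑ k ∈ Finset.range m, ∑ l ∈ Finset.range m, f (i + k * M) (i + l * M)) →
      (∀ i, i < M → IsSelfAdjoint (F i) ∧ F i * F i = F i) ∧
      (∀ i j, i < M → j < M → i ≠ j → F i * F j = 0) ∧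
      (∀ i, i + 1 < M → β (F i) = F (i + 1)) ∧
      ‖β (F (M - 1)) - F 0‖ ≤ 4 / Real.sqrt m :=
  averaged_matrix_units_towers_general m M hM f hfstar hfmul β hβ
end

section
/- For every integer n ≥ 2 and every η > 0 there exists δ > 0 with the following property: whenever A is a unital C*-algebra, σ : A → A is a unital *-homomorphism, and q_0,…,q_{n−1} are mutually orthogonal projections in A with ‖σ(q_l) − q_{l+1}‖ < δ for all 0 ≤ l ≤ n−2, there exists a unitary u ∈ A with ‖u − 1‖ < η and u σ(q_l) u* = q_{l+1} for all 0 ≤ l ≤ n−2. -/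
universe u

/-!
Put `p l = σ (q l)`. The element `x = ∑ q (l+1) p l + (1 - ∑ q (l+1)) (1 - ∑ p l)` satisfies
`x p l = q (l+1) x` and is within `2 n δ` of `1`. Its polar part `u = x (x⋆x)^{-1/2}` is then a
unitary close to `1`, and it still satisfies `u p l = q (l+1) u` because `x⋆x` commutes with
every `p l`.
-/

open Finset

lemma Real.abs_inv_sqrt_sub_one_le {t : ℝ} (ht : 1 / 2 ≤ t) : |(√t)⁻¹ - 1| ≤ |t - 1| := by
  have hsq : √t * √t = t := Real.mul_self_sqrt (by linarith)
  have hs : 7 / 10 ≤ √t := by nlinarith [Real.sqrt_nonneg t]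
  have key : (√t)⁻¹ - 1 = (1 - t) / (√t * (1 + √t)) := by
    field_simp
    nlinarith
  have hden : 1 ≤ √t * (1 + √t) := by nlinarith
  rw [key, abs_div, abs_of_pos (a := √t * (1 + √t)) (by linarith), abs_sub_comm]
  exact div_le_self (abs_nonneg _) hden

section Orthogonal

variable {R ι : Type*} [Ring R] {s : Finset ι} {p : ι → R} {j : ι}

lemma sum_mul_mul_eq_of_orthogonal (hp : ∀ i ∈ s, IsIdempotentElem (p i))
    (horth : (s : Set ι).Pairwise fun i j ↦ p i * p j = 0) (hj : j ∈ s) (f : ι → R) :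
    (∑ i ∈ s, f i * p i) * p j = f j * p j := by
  rw [sum_mul, sum_eq_single_of_mem j hj fun i hi hij ↦ by
    rw [mul_assoc, horth hi hj hij, mul_zero], mul_assoc, (hp j hj).eq]

lemma mul_sum_mul_eq_of_orthogonal (hp : ∀ i ∈ s, IsIdempotentElem (p i))
    (horth : (s : Set ι).Pairwise fun i j ↦ p i * p j = 0) (hj : j ∈ s) (g : ι → R) :
    p j * ∑ i ∈ s, p i * g i = p j * g j := by
  rw [mul_sum, sum_eq_single_of_mem j hj fun i hi hij ↦ by
    rw [← mul_assoc, horth hj hi (Ne.symm hij), zero_mul], ← mul_assoc, (hp j hj).eq]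

lemma sum_mul_eq_of_orthogonal (hp : ∀ i ∈ s, IsIdempotentElem (p i))
    (horth : (s : Set ι).Pairwise fun i j ↦ p i * p j = 0) (hj : j ∈ s) :
    (∑ i ∈ s, p i) * p j = p j := by
  simpa using sum_mul_mul_eq_of_orthogonal hp horth hj 1

lemma mul_sum_eq_of_orthogonal (hp : ∀ i ∈ s, IsIdempotentElem (p i))
    (horth : (s : Set ι).Pairwise fun i j ↦ p i * p j = 0) (hj : j ∈ s) :
    p j * ∑ i ∈ s, p i = p j := by
  simpa using mul_sum_mul_eq_of_orthogonal hp horth hj 1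

lemma IsStarProjection.sum [StarRing R] (hp : ∀ i ∈ s, IsStarProjection (p i))
    (horth : (s : Set ι).Pairwise fun i j ↦ p i * p j = 0) :
    IsStarProjection (∑ i ∈ s, p i) where
  isIdempotentElem := by
    rw [IsIdempotentElem, mul_sum]
    exact sum_congr rfl fun j hj ↦
      sum_mul_eq_of_orthogonal (fun i hi ↦ (hp i hi).isIdempotentElem) horth hj
  isSelfAdjoint := isSelfAdjoint_sum s fun i hi ↦ (hp i hi).isSelfAdjoint

end Orthogonal

section Intertwiner

variable {A ι : Type*} {s : Finset ι} {p q : ι → A}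

def intertwiner [Ring A] (s : Finset ι) (p q : ι → A) : A :=
  ∑ i ∈ s, q i * p i + (1 - ∑ i ∈ s, q i) * (1 - ∑ i ∈ s, p i)

lemma intertwiner_mul [Ring A] (hp : ∀ i ∈ s, IsIdempotentElem (p i))
    (hp_orth : (s : Set ι).Pairwise fun i j ↦ p i * p j = 0)
    (hq : ∀ i ∈ s, IsIdempotentElem (q i))
    (hq_orth : (s : Set ι).Pairwise fun i j ↦ q i * q j = 0) {j : ι} (hj : j ∈ s) :
    intertwiner s p q * p j = q j * intertwiner s p q := by
  have hP : (1 - ∑ i ∈ s, p i) * p j = 0 := by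
    rw [sub_mul, one_mul, sum_mul_eq_of_orthogonal hp hp_orth hj, sub_self]
  have hQ : q j * (1 - ∑ i ∈ s, q i) = 0 := by
    rw [mul_sub, mul_one, mul_sum_eq_of_orthogonal hq hq_orth hj, sub_self]
  rw [intertwiner, add_mul, mul_add, mul_assoc, hP, ← mul_assoc (q j), hQ,
    sum_mul_mul_eq_of_orthogonal hp hp_orth hj, mul_sum_mul_eq_of_orthogonal hq hq_orth hj]
  simp

lemma norm_intertwiner_sub_one_le [NormedRing A] [StarRing A] [CStarRing A]
    (hq : ∀ i ∈ s, IsStarProjection (q i))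
    (hq_orth : (s : Set ι).Pairwise fun i j ↦ q i * q j = 0)
    {δ : ℝ} (hδ : ∀ i ∈ s, ‖p i - q i‖ ≤ δ) :
    ‖intertwiner s p q - 1‖ ≤ 2 * #s * δ := by
  set P := ∑ i ∈ s, p i
  set Q := ∑ i ∈ s, q i
  have hQ : IsStarProjection Q := IsStarProjection.sum hq hq_orth
  have hx : intertwiner s p q - 1 = ∑ i ∈ s, q i * (p i - q i) + (1 - Q) * (Q - P) := by
    have hsum : ∑ i ∈ s, q i * (p i - q i) = ∑ i ∈ s, q i * p i - Q := by
      rw [← sum_sub_distrib]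
      exact sum_congr rfl fun i hi ↦ by rw [mul_sub, (hq i hi).isIdempotentElem.eq]
    rw [intertwiner, hsum, mul_sub (1 - Q) Q, hQ.one_sub_mul_self]
    noncomm_ring
  have hsum : ‖∑ i ∈ s, q i * (p i - q i)‖ ≤ #s * δ := by
    refine (norm_sum_le _ _).trans ?_
    rw [← nsmul_eq_mul, ← sum_const]
    refine sum_le_sum fun i hi ↦ (norm_mul_le _ _).trans ?_
    exact (mul_le_of_le_one_left (norm_nonneg _) (hq i hi).norm_le).trans (hδ i hi)
  have hQP : ‖Q - P‖ ≤ #s * δ := by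
    rw [← sum_sub_distrib, ← nsmul_eq_mul, ← sum_const]
    refine (norm_sum_le _ _).trans (sum_le_sum fun i hi ↦ ?_)
    rw [norm_sub_rev]
    exact hδ i hi
  calc ‖intertwiner s p q - 1‖
      ≤ ‖∑ i ∈ s, q i * (p i - q i)‖ + ‖1 - Q‖ * ‖Q - P‖ := by
        rw [hx]; exact (norm_add_le _ _).trans (add_le_add_right (norm_mul_le _ _) _)
    _ ≤ #s * δ + 1 * (#s * δ) := by
        gcongr
        exact hQ.one_sub.norm_le
    _ = 2 * #s * δ := by ring

end Intertwiner

lemma norm_star_mul_self_sub_one_le {A : Type*} [NormedRing A] [StarRing A] [NormedStarGroup A]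
    (x : A) : ‖star x * x - 1‖ ≤ ‖x - 1‖ * (2 + ‖x - 1‖) := by
  have h : star x * x - 1 = star (x - 1) * (x - 1) + star (x - 1) + (x - 1) := by
    rw [star_sub, star_one]; noncomm_ring
  rw [h]
  refine (norm_add₃_le).trans ?_
  have hmul := norm_mul_le (star (x - 1)) (x - 1)
  rw [norm_star] at hmul ⊢
  linarith

lemma CStarRing.norm_one_le {E : Type*} [NormedRing E] [StarRing E] [CStarRing E] :
    ‖(1 : E)‖ ≤ 1 :=
  (IsStarProjection.one E).norm_le

section Polar

variable {A : Type*} [CStarAlgebra A]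

lemma abs_sub_one_le_of_mem_spectrum {a : A} {t : ℝ} (ht : t ∈ spectrum ℝ a) :
    |t - 1| ≤ ‖a - 1‖ := by
  have h : t - 1 ∈ spectrum ℝ (a - algebraMap ℝ A 1) := by
    rw [← spectrum.sub_singleton_eq]
    exact Set.sub_mem_sub ht rfl
  rw [map_one] at h
  have := spectrum.subset_closedBall_norm_mul (𝕜 := ℝ) (a - 1) h
  rw [Metric.mem_closedBall, dist_zero_right, Real.norm_eq_abs] at this
  exact this.trans (mul_le_of_le_one_right (norm_nonneg _) CStarRing.norm_one_le)

/-- For invertible `x`, the unitary factor of its polar decomposition `x = u |x|`. -/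
noncomputable def polarUnitary (x : A) : A :=
  x * cfc (fun t : ℝ ↦ (√t)⁻¹) (star x * x)

lemma polarUnitary_mul_eq_mul_polarUnitary {x p q : A} (hp : IsSelfAdjoint p)
    (hq : IsSelfAdjoint q) (h : x * p = q * x) :
    polarUnitary x * p = q * polarUnitary x := by
  have h' : p * star x = star x * q := by
    simpa [hp.star_eq, hq.star_eq] using congr(star $h)
  have hcomm : Commute (star x * x) p := by
    rw [Commute, SemiconjBy, mul_assoc, h, ← mul_assoc, ← h', mul_assoc]
  rw [polarUnitary, mul_assoc, (hcomm.cfc_real _).eq, ← mul_assoc, h, mul_assoc]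

lemma star_polarUnitary_mul_self {x : A} (hx : ∀ t ∈ spectrum ℝ (star x * x), 0 < t) :
    star (polarUnitary x) * polarUnitary x = 1 := by
  set a := star x * x
  have ha : IsSelfAdjoint a := .star_mul_self x
  have hf : ContinuousOn (fun t : ℝ ↦ (√t)⁻¹) (spectrum ℝ a) :=
    Real.continuous_sqrt.continuousOn.inv₀ fun t ht ↦ (Real.sqrt_pos.mpr (hx t ht)).ne'
  have hbab : cfc (fun t : ℝ ↦ (√t)⁻¹ * t * (√t)⁻¹) a =
      cfc (fun t : ℝ ↦ (√t)⁻¹) a * a * cfc (fun t : ℝ ↦ (√t)⁻¹) a := by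
    rw [cfc_mul (fun t : ℝ ↦ (√t)⁻¹ * t) _ a (hf.mul continuousOn_id) hf,
      cfc_mul _ (fun t : ℝ ↦ t) a hf continuousOn_id, cfc_id' ℝ a]
  have hone : cfc (fun t : ℝ ↦ (√t)⁻¹ * t * (√t)⁻¹) a = 1 := by
    rw [← cfc_one ℝ a]
    refine cfc_congr fun t ht ↦ ?_
    have hs0 := (Real.sqrt_pos.mpr (hx t ht)).ne'
    simp only [Pi.one_apply]
    field_simp
    exact (Real.sq_sqrt (hx t ht).le).symm
  rw [polarUnitary, star_mul, (cfc_predicate (fun t : ℝ ↦ (√t)⁻¹) a).star_eq, ← hone, hbab]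
  simp only [a, mul_assoc]

lemma norm_cfc_inv_sqrt_sub_one_le {a : A} (ha : IsSelfAdjoint a) (h : ‖a - 1‖ ≤ 1 / 2) :
    ‖cfc (fun t : ℝ ↦ (√t)⁻¹) a - 1‖ ≤ ‖a - 1‖ := by
  have hspec : ∀ t ∈ spectrum ℝ a, |t - 1| ≤ ‖a - 1‖ := fun t ht ↦
    abs_sub_one_le_of_mem_spectrum ht
  have hhalf : ∀ t ∈ spectrum ℝ a, 1 / 2 ≤ t := fun t ht ↦ by
    linarith [(abs_le.mp ((hspec t ht).trans h)).1]
  have hf : ContinuousOn (fun t : ℝ ↦ (√t)⁻¹) (spectrum ℝ a) :=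
    Real.continuous_sqrt.continuousOn.inv₀ fun t ht ↦
      (Real.sqrt_pos.mpr (by linarith [hhalf t ht])).ne'
  rw [show cfc (fun t : ℝ ↦ (√t)⁻¹) a - 1 = cfc (fun t : ℝ ↦ (√t)⁻¹ - 1) a by
    rw [cfc_sub _ _ a hf, cfc_const_one ℝ a]]
  exact norm_cfc_le (norm_nonneg _) fun t ht ↦
    (Real.abs_inv_sqrt_sub_one_le (hhalf t ht)).trans (hspec t ht)

lemma norm_polarUnitary_sub_one_le {x : A} {ε : ℝ} (hx : ‖x - 1‖ ≤ ε) (hε : ε ≤ 1 / 6) :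
    ‖polarUnitary x - 1‖ ≤ 5 * ε := by
  set b := cfc (fun t : ℝ ↦ (√t)⁻¹) (star x * x)
  have hε0 : 0 ≤ ε := (norm_nonneg _).trans hx
  have ha : ‖star x * x - 1‖ ≤ 3 * ε := by
    refine (norm_star_mul_self_sub_one_le x).trans ?_
    nlinarith [norm_nonneg (x - 1)]
  have hb : ‖b - 1‖ ≤ 3 * ε :=
    (norm_cfc_inv_sqrt_sub_one_le (.star_mul_self x) (by linarith)).trans ha
  have hb' : ‖b‖ ≤ 1 + 3 * ε := calc
    ‖b‖ = ‖(b - 1) + 1‖ := by rw [sub_add_cancel]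
    _ ≤ 3 * ε + 1 := norm_add_le_of_le hb CStarRing.norm_one_le
    _ = 1 + 3 * ε := by ring
  calc ‖polarUnitary x - 1‖ = ‖(x - 1) * b + (b - 1)‖ := by
        rw [polarUnitary]; congr 1; noncomm_ring
    _ ≤ ‖x - 1‖ * ‖b‖ + ‖b - 1‖ := norm_add_le_of_le (norm_mul_le _ _) le_rfl
    _ ≤ ε * (1 + 3 * ε) + 3 * ε := by gcongr
    _ ≤ 5 * ε := by nlinarith

lemma polarUnitary_mem_unitary {x : A} {ε : ℝ} (hx : ‖x - 1‖ ≤ ε) (hε : ε ≤ 1 / 6) :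
    polarUnitary x ∈ unitary A := by
  have hunit : IsUnit (polarUnitary x) := by
    by_contra h
    refine nonunits.subset_compl_ball h ?_
    rw [Metric.mem_ball, dist_eq_norm]
    linarith [norm_polarUnitary_sub_one_le hx hε]
  refine hunit.mem_unitary_of_star_mul_self (star_polarUnitary_mul_self fun t ht ↦ ?_)
  have := (abs_sub_one_le_of_mem_spectrum ht).trans (norm_star_mul_self_sub_one_le x)
  have hε0 : 0 ≤ ε := (norm_nonneg _).trans hx
  nlinarith [abs_le.mp this, norm_nonneg (x - 1)]

end Polar

lemma exists_unitary_conj_eq_of_norm_sub_le {A ι : Type*} [CStarAlgebra A] {s : Finset ι}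
    {p q : ι → A} (hp : ∀ i ∈ s, IsStarProjection (p i))
    (hp_orth : (s : Set ι).Pairwise fun i j ↦ p i * p j = 0)
    (hq : ∀ i ∈ s, IsStarProjection (q i))
    (hq_orth : (s : Set ι).Pairwise fun i j ↦ q i * q j = 0)
    {δ : ℝ} (hδ : ∀ i ∈ s, ‖p i - q i‖ ≤ δ) (hsδ : 12 * #s * δ ≤ 1) :
    ∃ u ∈ unitary A, ‖u - 1‖ ≤ 10 * #s * δ ∧ ∀ i ∈ s, u * p i * star u = q i := by
  set x := intertwiner s p q
  have hx : ‖x - 1‖ ≤ 2 * #s * δ := norm_intertwiner_sub_one_le hq hq_orth hδ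
  have hu : polarUnitary x ∈ unitary A := polarUnitary_mem_unitary hx (by linarith)
  refine ⟨polarUnitary x, hu, by linarith [norm_polarUnitary_sub_one_le hx (by linarith)],
    fun i hi ↦ ?_⟩
  have hxp : x * p i = q i * x := intertwiner_mul (fun i hi ↦ (hp i hi).isIdempotentElem) hp_orth
    (fun i hi ↦ (hq i hi).isIdempotentElem) hq_orth hi
  rw [polarUnitary_mul_eq_mul_polarUnitary (hp i hi).isSelfAdjoint (hq i hi).isSelfAdjoint hxp,
    mul_assoc, Unitary.mul_star_self_of_mem hu, mul_one]

/-- For every `n ≥ 2` and `η > 0` there is `δ > 0` such that whenever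
`σ : A → A` is a unital *-homomorphism of a unital C*-algebra `A` and
`q 0, …, q (n-1)` are mutually orthogonal projections in `A` with
`‖σ (q l) - q (l+1)‖ < δ` for `0 ≤ l ≤ n-2`, there is a unitary `u ∈ A` with
`‖u - 1‖ < η` and `u σ (q l) u* = q (l+1)` for `0 ≤ l ≤ n-2`. -/
theorem exists_unitary_conjugating_almost_shifted_projections :
    ∀ n : ℕ, 2 ≤ n → ∀ η : ℝ, 0 < η → ∃ δ : ℝ, 0 < δ ∧
      ∀ (A : Type u) [NormedRing A] [StarRing A] [CStarRing A] [CompleteSpace A]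
        [NormedAlgebra ℂ A] [StarModule ℂ A],
        ∀ (σ : A →⋆ₐ[ℂ] A) (q : ℕ → A),
          (∀ l, l < n → IsSelfAdjoint (q l) ∧ q l * q l = q l) →
          (∀ l l', l < n → l' < n → l ≠ l' → q l * q l' = 0) →
          (∀ l, l + 1 < n → ‖σ (q l) - q (l + 1)‖ < δ) →
          ∃ u ∈ unitary A, ‖u - 1‖ < η ∧
            ∀ l, l + 1 < n → u * σ (q l) * star u = q (l + 1) := by
  intro n hn η hη
  have hn0 : (0 : ℝ) < n := by norm_cast; omega
  set δ := min η 1 / (12 * n)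
  refine ⟨δ, by positivity, fun A _ _ _ _ _ _ σ q hq hq_orth hclose ↦ ?_⟩
  let _ : CStarAlgebra A := {}
  have hmem : ∀ {l}, l ∈ range (n - 1) ↔ l + 1 < n := by intro l; rw [mem_range]; omega
  have hproj : ∀ l, l < n → IsStarProjection (q l) := fun l hl ↦ ⟨(hq l hl).2, (hq l hl).1⟩
  have hsδ : #(range (n - 1)) * δ ≤ min η 1 / 12 := calc
    #(range (n - 1)) * δ ≤ n * δ := by rw [card_range]; gcongr; exact_mod_cast n.sub_le 1
    _ = min η 1 / 12 := by simp only [δ]; field_simp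
  obtain ⟨u, hu, hu1, hconj⟩ := exists_unitary_conj_eq_of_norm_sub_le
    (s := range (n - 1)) (p := fun l ↦ σ (q l)) (q := fun l ↦ q (l + 1))
    (fun l hl ↦ (hproj l (by have := hmem.mp hl; omega)).map σ)
    (fun l hl l' hl' hne ↦ show σ (q l) * σ (q l') = 0 by
      rw [← map_mul, hq_orth l l' (by have := hmem.mp hl; omega)
        (by have := hmem.mp hl'; omega) hne, map_zero])
    (fun l hl ↦ hproj (l + 1) (hmem.mp hl))
    (fun l hl l' hl' hne ↦ hq_orth _ _ (hmem.mp hl) (hmem.mp hl') (by simpa using hne))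
    (fun l hl ↦ (hclose l (hmem.mp hl)).le)
    (by linarith [min_le_right η 1])
  exact ⟨u, hu, by linarith [min_le_left η 1, lt_min hη one_pos], fun l hl ↦ hconj l (hmem.mpr hl)⟩
end
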